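/- arXiv:0812.1648 — 8 statements merged into one kernel-verified Lean document; each statement's English description precedes it below -/
import Mathlib

section
/- The triangular map F is time-reversal symmetric with respect to the two involutions T₁(x,y) = (y,x) and T₂(x,y) = (1-y, 1-x): for every (x,y) ∈ (0,1)² and i ∈ {1,2}, F(Tᵢ(F(Tᵢ(x,y)))) = (x,y); equivalently Tᵢ ∘ F ∘ Tᵢ = F⁻¹ on (0,1)². -/
open Set MeasureTheory

/-- The triangular map `F` is time-reversal symmetric with
respect to the involutions `T₁(x,y) = (y,x)` and `T₂(x,y) = (1-y,1-x)`:
on `(0,1)²`, `F ∘ Tᵢ ∘ F ∘ Tᵢ = id`, i.e. `Tᵢ ∘ F ∘ Tᵢ = F⁻¹`. -/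
theorem triangular_map_time_reversal
    (α : ℝ) (hα : 1 < α)
    (f₀ f₁ g₀ g₁ : ℝ → ℝ)
    (hf₀C : ContDiffOn ℝ 2 f₀ (Icc 0 (1/2)))
    (hf₀0 : f₀ 0 = 0) (hf₀half : f₀ (1/2) = 1)
    (hf₀deriv : ∀ x ∈ Icc (0:ℝ) (1/2), α ≤ deriv f₀ x)
    (hf₀maps : MapsTo f₀ (Icc 0 (1/2)) (Icc 0 1))
    (hf₁ : ∀ x, f₁ x = 1 - f₀ (1 - x))
    (hg₀maps : MapsTo g₀ (Icc 0 1) (Icc 0 (1/2)))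
    (hg₁maps : MapsTo g₁ (Icc 0 1) (Icc (1/2) 1))
    (hg₀left : ∀ x ∈ Icc (0:ℝ) (1/2), g₀ (f₀ x) = x)
    (hg₀right : ∀ y ∈ Icc (0:ℝ) 1, f₀ (g₀ y) = y)
    (hg₁left : ∀ x ∈ Icc (1/2:ℝ) 1, g₁ (f₁ x) = x)
    (hg₁right : ∀ y ∈ Icc (0:ℝ) 1, f₁ (g₁ y) = y)
    (F T₁ T₂ : ℝ × ℝ → ℝ × ℝ)
    (hF : ∀ p : ℝ × ℝ, F p = if p.1 < 1/2 then (f₀ p.1, g₀ p.2) else (f₁ p.1, g₁ p.2))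
    (hT₁ : ∀ p : ℝ × ℝ, T₁ p = (p.2, p.1))
    (hT₂ : ∀ p : ℝ × ℝ, T₂ p = (1 - p.2, 1 - p.1)) :
    ∀ p ∈ Ioo (0:ℝ) 1 ×ˢ Ioo (0:ℝ) 1,
      F (T₁ (F (T₁ p))) = p ∧ F (T₂ (F (T₂ p))) = p := by
  rintro ⟨x, y⟩ ⟨⟨hx0, hx1⟩, hy0, hy1⟩
  simp only [] at hx0 hx1 hy0 hy1
  have hxI : x ∈ Icc (0:ℝ) 1 := ⟨hx0.le, hx1.le⟩
  have h1xI : (1 - x) ∈ Icc (0:ℝ) 1 := ⟨by linarith, by linarith⟩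
  constructor
  · rw [hT₁ (x, y)]
    by_cases hy : y < 1/2
    · have hyI : y ∈ Icc (0:ℝ) (1/2) := ⟨hy0.le, hy.le⟩
      have hg := hg₀maps hxI
      have hglt : g₀ x < 1/2 := by
        rcases lt_or_eq_of_le hg.2 with h | h
        · exact h
        · exfalso
          have := hg₀right x hxI
          rw [h, hf₀half] at this
          linarith
      have e1 : F (y, x) = (f₀ y, g₀ x) := by rw [hF]; dsimp only; rw [if_pos hy]
      have e2 : T₁ (f₀ y, g₀ x) = (g₀ x, f₀ y) := hT₁ _
      have e3 : F (g₀ x, f₀ y) = (f₀ (g₀ x), g₀ (f₀ y)) := by rw [hF]; dsimp only; rw [if_pos hglt]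
      rw [e1, e2, e3, hg₀right x hxI, hg₀left y hyI]
    · have hyI : y ∈ Icc (1/2:ℝ) 1 := ⟨not_lt.mp hy, hy1.le⟩
      have hg := hg₁maps hxI
      have hgn : ¬ g₁ x < 1/2 := not_lt.mpr hg.1
      have e1 : F (y, x) = (f₁ y, g₁ x) := by rw [hF]; dsimp only; rw [if_neg hy]
      have e2 : T₁ (f₁ y, g₁ x) = (g₁ x, f₁ y) := hT₁ _
      have e3 : F (g₁ x, f₁ y) = (f₁ (g₁ x), g₁ (f₁ y)) := by rw [hF]; dsimp only; rw [if_neg hgn]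
      rw [e1, e2, e3, hg₁right x hxI, hg₁left y hyI]
  · rw [hT₂ (x, y)]
    simp only
    by_cases hy : 1 - y < 1/2
    · have hg := hg₀maps h1xI
      have hne : ¬ (1 - g₀ (1 - x) < 1/2) := by
        push_neg
        linarith [hg.2]
      have e1 : F (1 - y, 1 - x) = (f₀ (1 - y), g₀ (1 - x)) := by rw [hF]; dsimp only; rw [if_pos hy]
      have e2 : T₂ (f₀ (1 - y), g₀ (1 - x)) = (1 - g₀ (1 - x), 1 - f₀ (1 - y)) := hT₂ _
      have e3 : F (1 - g₀ (1 - x), 1 - f₀ (1 - y)) =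
          (f₁ (1 - g₀ (1 - x)), g₁ (1 - f₀ (1 - y))) := by rw [hF]; dsimp only; rw [if_neg hne]
      have h1 : f₁ (1 - g₀ (1 - x)) = x := by
        rw [hf₁]
        have h : (1 : ℝ) - (1 - g₀ (1 - x)) = g₀ (1 - x) := by ring
        rw [h, hg₀right _ h1xI]
        ring
      have h2 : g₁ (1 - f₀ (1 - y)) = y := by
        have h : 1 - f₀ (1 - y) = f₁ y := (hf₁ y).symm
        rw [h]
        exact hg₁left y ⟨by linarith, hy1.le⟩
      rw [e1, e2, e3, h1, h2]
    · have hg := hg₁maps h1xI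
      have hlt : 1 - g₁ (1 - x) < 1/2 := by
        rcases lt_or_eq_of_le hg.1 with h | h
        · linarith
        · exfalso
          have h2 := hg₁right (1 - x) h1xI
          rw [← h, hf₁] at h2
          have h3 : (1:ℝ) - (1/2) = 1/2 := by norm_num
          rw [h3, hf₀half] at h2
          linarith
      have e1 : F (1 - y, 1 - x) = (f₁ (1 - y), g₁ (1 - x)) := by rw [hF]; dsimp only; rw [if_neg hy]
      have e2 : T₂ (f₁ (1 - y), g₁ (1 - x)) = (1 - g₁ (1 - x), 1 - f₁ (1 - y)) := hT₂ _
      have e3 : F (1 - g₁ (1 - x), 1 - f₁ (1 - y)) =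
          (f₀ (1 - g₁ (1 - x)), g₀ (1 - f₁ (1 - y))) := by rw [hF]; dsimp only; rw [if_pos hlt]
      have h1 : f₀ (1 - g₁ (1 - x)) = x := by
        have h := hg₁right (1 - x) h1xI
        rw [hf₁] at h
        linarith
      have h2 : g₀ (1 - f₁ (1 - y)) = y := by
        have h : 1 - f₁ (1 - y) = f₀ y := by rw [hf₁]; ring_nf
        rw [h]
        exact hg₀left y ⟨hy0.le, by linarith⟩
      rw [e1, e2, e3, h1, h2]
end

section
/- If a nonnegative integrable function ρ on [0,1]² is an invariant density for F, then the functions (x,y) ↦ ρ(y,x) and (x,y) ↦ ρ(1-y, 1-x) are also invariant densities for F. -/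
/-!
The swap `(x,y) ↦ (y,x)` conjugates `F` to its inverse. On the lower rectangle
`(0,1) × (0,1/2)` the invariance equation of `(x,y) ↦ ρ(y,x)` at `(x,y)` is the invariance
equation of `ρ` at `(f₀ y, g₀ x)`, thanks to the cancellations
`g₀'(f₀ y) f₀'(y) = 1 = f₀'(g₀ x) g₀'(x)`. The map `(x,y) ↦ (f₀ y, g₀ x)` is a differentiable
involution of that rectangle, so it pulls null sets back to null sets and the equation, which
holds almost everywhere, transfers. The reflection `(x,y) ↦ (1-x,1-y)` commutes with `F` and
exchanges the two halves of the square together with the two branches, which reduces the upper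
half and the second symmetry to this case.
-/

open Set MeasureTheory

/-- A nonnegative integrable function `ρ` on `[0,1]²` is an *invariant density* for the
triangular map `F` built from `f₀, f₁, g₀, g₁` if it satisfies the Perron–Frobenius
fixed-point equation almost everywhere on the square. -/
def IsInvariantDensity (f₀ f₁ g₀ g₁ : ℝ → ℝ) (ρ : ℝ × ℝ → ℝ) : Prop :=
  (∀ p ∈ Set.Icc (0:ℝ) 1 ×ˢ Set.Icc (0:ℝ) 1, 0 ≤ ρ p) ∧
  MeasureTheory.IntegrableOn ρ (Set.Icc 0 1 ×ˢ Set.Icc 0 1) ∧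
  (∀ᵐ p ∂(MeasureTheory.volume.restrict (Set.Icc (0:ℝ) 1 ×ˢ Set.Icc (0:ℝ) 1)),
    (p.2 < 1/2 → ρ p = deriv g₀ p.1 * deriv f₀ p.2 * ρ (g₀ p.1, f₀ p.2)) ∧
    (1/2 ≤ p.2 → ρ p = deriv g₁ p.1 * deriv f₁ p.2 * ρ (g₁ p.1, f₁ p.2)))

open Filter Topology

-- `deriv f x ≠ 0` forces differentiability at `x`, since `deriv` is `0` where `f` is not
-- differentiable.
theorem strictMonoOn_of_forall_deriv_pos {f : ℝ → ℝ} {D : Set ℝ} (hD : Convex ℝ D)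
    (h : ∀ x ∈ D, 0 < deriv f x) : StrictMonoOn f D :=
  strictMonoOn_of_deriv_pos hD
    (fun x hx => (differentiableAt_of_deriv_ne_zero (h x hx).ne').continuousAt.continuousWithinAt)
    (fun x hx => h x (interior_subset hx))

theorem Set.MapsTo.Ioo_of_rightInvOn {f g : ℝ → ℝ} {a b c d : ℝ}
    (hg : MapsTo g (Icc c d) (Icc a b)) (hfg : RightInvOn g f (Icc c d)) (ha : f a = c)
    (hb : f b = d) : MapsTo g (Ioo c d) (Ioo a b) := fun x hx => by
  obtain ⟨hxa, hxb⟩ := hg (Ioo_subset_Icc_self hx)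
  have hfgx : f (g x) = x := hfg (Ioo_subset_Icc_self hx)
  refine ⟨hxa.lt_of_ne fun h => hx.1.ne' ?_, hxb.lt_of_ne fun h => hx.2.ne ?_⟩
  · rw [← hfgx, ← h, ha]
  · rw [← hfgx, h, hb]

theorem Set.InvOn.deriv_mul_deriv_eq_one {f g : ℝ → ℝ} {I J : Set ℝ} (hfg : InvOn g f I J)
    (hI : IsOpen I) (hJ : IsOpen J) (hmono : StrictMonoOn f I) (hf : MapsTo f I J)
    (hg : MapsTo g J I) {y : ℝ} (hy : y ∈ I) (hdy : deriv f y ≠ 0) :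
    deriv g (f y) * deriv f y = 1 := by
  have hgmono : StrictMonoOn g J := fun a ha b hb hab => by
    by_contra! h
    have hba := hmono.monotoneOn (hg hb) (hg ha) h
    rw [hfg.2 ha, hfg.2 hb] at hba
    exact hab.not_ge hba
  have hcont : ContinuousAt g (f y) := by
    refine hgmono.continuousAt_of_image_mem_nhds (hJ.mem_nhds (hf hy)) ?_
    rw [(hfg.symm.bijOn hg hf).image_eq, hfg.1 hy]
    exact hI.mem_nhds hy
  have hderiv : HasDerivAt g (deriv f y)⁻¹ (f y) := by
    refine HasDerivAt.of_local_left_inverse hcont ?_ hdy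
      (eventually_of_mem (hJ.mem_nhds (hf hy)) hfg.2)
    rw [hfg.1 hy]
    exact (differentiableAt_of_deriv_ne_zero hdy).hasDerivAt
  rw [hderiv.deriv, inv_mul_cancel₀ hdy]

theorem eqOn_one_sub_of_leftInvOn {f₀ f₁ g₀ g₁ : ℝ → ℝ} (hf₁ : ∀ x, f₁ x = 1 - f₀ (1 - x))
    (hg₁ : LeftInvOn g₁ f₁ (Icc (1/2) 1)) (hg₀ : MapsTo g₀ (Icc 0 1) (Icc 0 (1/2)))
    (hfg₀ : RightInvOn g₀ f₀ (Icc 0 1)) : EqOn g₁ (fun x => 1 - g₀ (1 - x)) (Icc 0 1) := by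
  intro x hx
  have hx' : 1 - x ∈ Icc (0:ℝ) 1 := ⟨by linarith [hx.2], by linarith [hx.1]⟩
  obtain ⟨h0, h1⟩ := hg₀ hx'
  have hf : f₁ (1 - g₀ (1 - x)) = x := by rw [hf₁, sub_sub_cancel, hfg₀ hx', sub_sub_cancel]
  calc g₁ x = g₁ (f₁ (1 - g₀ (1 - x))) := by rw [hf]
    _ = 1 - g₀ (1 - x) := hg₁ ⟨by linarith, by linarith⟩

theorem ae_restrict_comp_of_leftInvOn {E : Type*} [NormedAddCommGroup E] [NormedSpace ℝ E]
    [FiniteDimensional ℝ E] [MeasurableSpace E] [BorelSpace E] {μ : Measure E}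
    [μ.IsAddHaarMeasure] {T S : E → E} {A B : Set E} {P : E → Prop} (hA : MeasurableSet A)
    (hB : MeasurableSet B) (hT : MapsTo T A B) (hS : DifferentiableOn ℝ S B)
    (hST : LeftInvOn S T A) (hP : ∀ᵐ q ∂μ.restrict B, P q) : ∀ᵐ p ∂μ.restrict A, P (T p) := by
  rw [ae_restrict_iff' hB, ae_iff] at hP
  rw [ae_restrict_iff' hA, ae_iff]
  refine measure_mono_null (fun p hp => ?_)
    (addHaar_image_eq_zero_of_differentiableOn_of_addHaar_eq_zero μ
      (hS.mono fun q hq => (Classical.not_imp.1 hq).1) hP)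
  obtain ⟨hpA, hpP⟩ := Classical.not_imp.1 hp
  exact ⟨T p, Classical.not_imp.2 ⟨hT hpA, hpP⟩, hST hpA⟩

def PerronFrobeniusEq (f g : ℝ → ℝ) (ρ : ℝ × ℝ → ℝ) (p : ℝ × ℝ) : Prop :=
  ρ p = deriv g p.1 * deriv f p.2 * ρ (g p.1, f p.2)

theorem PerronFrobeniusEq.swap {f g : ℝ → ℝ} {ρ : ℝ × ℝ → ℝ} {x y : ℝ} (hy : g (f y) = y)
    (hx : f (g x) = x) (hdy : deriv g (f y) * deriv f y = 1)
    (hdx : deriv g x * deriv f (g x) = 1) (h : PerronFrobeniusEq f g ρ (f y, g x)) :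
    PerronFrobeniusEq f g (fun p => ρ (p.2, p.1)) (x, y) := by
  unfold PerronFrobeniusEq at h ⊢
  dsimp only at h ⊢
  rw [hy, hx] at h
  rw [h]
  linear_combination (-(deriv g x * deriv f (g x) * ρ (y, x))) * hdy - ρ (y, x) * hdx

theorem perronFrobeniusEq_reflect_iff {f₀ f₁ g₀ g₁ : ℝ → ℝ} {σ : ℝ × ℝ → ℝ} {x y : ℝ}
    (hf₁ : ∀ x, f₁ x = 1 - f₀ (1 - x)) (hg₁ : g₁ =ᶠ[𝓝 (1 - x)] fun x => 1 - g₀ (1 - x)) :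
    PerronFrobeniusEq f₁ g₁ σ (1 - x, 1 - y) ↔
      PerronFrobeniusEq f₀ g₀ (fun p => σ (1 - p.1, 1 - p.2)) (x, y) := by
  have hdg : deriv g₁ (1 - x) = deriv g₀ x := by
    rw [hg₁.deriv_eq, deriv_const_sub, deriv_comp_const_sub, neg_neg, sub_sub_cancel]
  have hdf : deriv f₁ (1 - y) = deriv f₀ y := by
    rw [funext hf₁, deriv_const_sub, deriv_comp_const_sub, neg_neg, sub_sub_cancel]
  simp only [PerronFrobeniusEq, hdg, hdf, hg₁.eq_of_nhds, hf₁, sub_sub_cancel]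

theorem ae_restrict_unitSquare_iff {P Q : ℝ × ℝ → Prop} :
    (∀ᵐ p ∂volume.restrict (Icc (0:ℝ) 1 ×ˢ Icc (0:ℝ) 1),
        (p.2 < 1/2 → P p) ∧ (1/2 ≤ p.2 → Q p)) ↔
      (∀ᵐ p ∂volume.restrict (Ioo (0:ℝ) 1 ×ˢ Ioo 0 (1/2)), P p) ∧
        ∀ᵐ p ∂volume.restrict (Ioo (0:ℝ) 1 ×ˢ Ioo (1/2) 1), Q p := by
  have h01 : (Ioo (0:ℝ) (1/2) ∪ Ioo (1/2) 1 : Set ℝ) =ᵐ[volume] Icc (0:ℝ) 1 := by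
    rw [← Icc_union_Icc_eq_Icc (by norm_num : (0:ℝ) ≤ 1/2) (by norm_num : (1/2:ℝ) ≤ 1)]
    exact Ioo_ae_eq_Icc.union Ioo_ae_eq_Icc
  have hsq :=
    (Measure.set_prod_ae_eq (Ioo_ae_eq_Icc (μ := volume) (a := (0:ℝ)) (b := 1)) h01).symm
  rw [prod_union, ← Measure.volume_eq_prod] at hsq
  rw [Measure.restrict_congr_set hsq, ae_restrict_union_iff]
  refine and_congr (eventually_congr ?_) (eventually_congr ?_)
  · filter_upwards [ae_restrict_mem (measurableSet_Ioo.prod measurableSet_Ioo)] with p hp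
    exact ⟨fun h => h.1 hp.2.2, fun h => ⟨fun _ => h, fun h' => absurd h' (not_le.2 hp.2.2)⟩⟩
  · filter_upwards [ae_restrict_mem (measurableSet_Ioo.prod measurableSet_Ioo)] with p hp
    exact ⟨fun h => h.2 hp.2.1.le, fun h => ⟨fun h' => absurd h' (not_lt.2 hp.2.1.le), fun _ => h⟩⟩

theorem isInvariantDensity_iff {f₀ f₁ g₀ g₁ : ℝ → ℝ} {ρ : ℝ × ℝ → ℝ} :
    IsInvariantDensity f₀ f₁ g₀ g₁ ρ ↔
      (∀ p ∈ Icc (0:ℝ) 1 ×ˢ Icc (0:ℝ) 1, 0 ≤ ρ p) ∧ IntegrableOn ρ (Icc 0 1 ×ˢ Icc 0 1) ∧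
        (∀ᵐ p ∂volume.restrict (Ioo (0:ℝ) 1 ×ˢ Ioo 0 (1/2)), PerronFrobeniusEq f₀ g₀ ρ p) ∧
        ∀ᵐ p ∂volume.restrict (Ioo (0:ℝ) 1 ×ˢ Ioo (1/2) 1), PerronFrobeniusEq f₁ g₁ ρ p :=
  and_congr_right' (and_congr_right' ae_restrict_unitSquare_iff)

theorem ae_perronFrobeniusEq_swap {f g : ℝ → ℝ} {I J : Set ℝ} {ρ : ℝ × ℝ → ℝ}
    (hI : MeasurableSet I) (hJ : MeasurableSet J) (hf : MapsTo f I J) (hg : MapsTo g J I)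
    (hfg : InvOn g f I J) (hd : ∀ y ∈ I, deriv g (f y) * deriv f y = 1)
    (hρ : ∀ᵐ p ∂volume.restrict (J ×ˢ I), PerronFrobeniusEq f g ρ p) :
    ∀ᵐ p ∂volume.restrict (J ×ˢ I), PerronFrobeniusEq f g (fun p => ρ (p.2, p.1)) p := by
  have hd' : ∀ x ∈ J, deriv g x * deriv f (g x) = 1 := fun x hx => by
    simpa only [hfg.2 hx] using hd (g x) (hg hx)
  have hfd : DifferentiableOn ℝ f I := fun y hy =>
    (differentiableAt_of_deriv_ne_zero
      (right_ne_zero_of_mul_eq_one (hd y hy))).differentiableWithinAt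
  have hgd : DifferentiableOn ℝ g J := fun x hx =>
    (differentiableAt_of_deriv_ne_zero
      (left_ne_zero_of_mul_eq_one (hd' x hx))).differentiableWithinAt
  have hT : MapsTo (fun p : ℝ × ℝ => (f p.2, g p.1)) (J ×ˢ I) (J ×ˢ I) :=
    fun p hp => ⟨hf hp.2, hg hp.1⟩
  have hTd : DifferentiableOn ℝ (fun p : ℝ × ℝ => (f p.2, g p.1)) (J ×ˢ I) :=
    (hfd.comp differentiableOn_snd fun p hp => hp.2).prodMk
      (hgd.comp differentiableOn_fst fun p hp => hp.1)
  have hTT : LeftInvOn (fun p : ℝ × ℝ => (f p.2, g p.1)) (fun p => (f p.2, g p.1)) (J ×ˢ I) :=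
    fun p hp => Prod.ext (hfg.2 hp.1) (hfg.1 hp.2)
  have hm := hJ.prod hI
  filter_upwards [ae_restrict_comp_of_leftInvOn hm hm hT hTd hTT hρ, ae_restrict_mem hm]
    with p hp hpU
  exact hp.swap (hfg.1 hpU.2) (hfg.2 hpU.1) (hd _ hpU.2) (hd' _ hpU.1)

theorem ae_perronFrobeniusEq_reflect_iff {f₀ f₁ g₀ g₁ : ℝ → ℝ} {σ : ℝ × ℝ → ℝ}
    (hf₁ : ∀ x, f₁ x = 1 - f₀ (1 - x)) (hg₁ : EqOn g₁ (fun x => 1 - g₀ (1 - x)) (Ioo 0 1)) :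
    (∀ᵐ p ∂volume.restrict (Ioo (0:ℝ) 1 ×ˢ Ioo (1/2) 1), PerronFrobeniusEq f₁ g₁ σ p) ↔
      ∀ᵐ p ∂volume.restrict (Ioo (0:ℝ) 1 ×ˢ Ioo 0 (1/2)),
        PerronFrobeniusEq f₀ g₀ (fun p => σ (1 - p.1, 1 - p.2)) p := by
  have hR : Differentiable ℝ (fun p : ℝ × ℝ => (1 - p.1, 1 - p.2)) := by fun_prop
  have hRR : ∀ p : ℝ × ℝ, (1 - (1 - p.1), 1 - (1 - p.2)) = p := fun p => by simp
  have hm₀ : MeasurableSet (Ioo (0:ℝ) 1 ×ˢ Ioo (0:ℝ) (1/2)) :=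
    measurableSet_Ioo.prod measurableSet_Ioo
  have hm₁ : MeasurableSet (Ioo (0:ℝ) 1 ×ˢ Ioo (1/2:ℝ) 1) :=
    measurableSet_Ioo.prod measurableSet_Ioo
  have hR₀₁ : MapsTo (fun p : ℝ × ℝ => (1 - p.1, 1 - p.2)) (Ioo 0 1 ×ˢ Ioo 0 (1/2))
      (Ioo 0 1 ×ˢ Ioo (1/2) 1) :=
    fun p ⟨⟨h₁, h₂⟩, h₃, h₄⟩ => ⟨⟨by linarith, by linarith⟩, by linarith, by linarith⟩
  have hR₁₀ : MapsTo (fun p : ℝ × ℝ => (1 - p.1, 1 - p.2)) (Ioo 0 1 ×ˢ Ioo (1/2) 1)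
      (Ioo 0 1 ×ˢ Ioo 0 (1/2)) :=
    fun p ⟨⟨h₁, h₂⟩, h₃, h₄⟩ => ⟨⟨by linarith, by linarith⟩, by linarith, by linarith⟩
  have hg₁' : ∀ x ∈ Ioo (0:ℝ) 1, g₁ =ᶠ[𝓝 (1 - x)] fun x => 1 - g₀ (1 - x) := fun x hx =>
    hg₁.eventuallyEq_of_mem (isOpen_Ioo.mem_nhds ⟨by linarith [hx.2], by linarith [hx.1]⟩)
  constructor
  · intro h
    filter_upwards [ae_restrict_comp_of_leftInvOn hm₀ hm₁ hR₀₁ hR.differentiableOn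
      (fun p _ => hRR p) h, ae_restrict_mem hm₀]
      with p hp hpU
    exact (perronFrobeniusEq_reflect_iff hf₁ (hg₁' _ hpU.1)).1 hp
  · intro h
    filter_upwards [ae_restrict_comp_of_leftInvOn hm₁ hm₀ hR₁₀ hR.differentiableOn
      (fun p _ => hRR p) h, ae_restrict_mem hm₁]
      with p hp hpU
    have hx : 1 - p.1 ∈ Ioo (0:ℝ) 1 := ⟨by linarith [hpU.1.2], by linarith [hpU.1.1]⟩
    simpa only [sub_sub_cancel] using (perronFrobeniusEq_reflect_iff hf₁ (hg₁' _ hx)).2 hp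

theorem IsInvariantDensity.reflect {f₀ f₁ g₀ g₁ : ℝ → ℝ} {ρ : ℝ × ℝ → ℝ}
    (hf₁ : ∀ x, f₁ x = 1 - f₀ (1 - x)) (hg₁ : EqOn g₁ (fun x => 1 - g₀ (1 - x)) (Ioo 0 1))
    (hρ : IsInvariantDensity f₀ f₁ g₀ g₁ ρ) :
    IsInvariantDensity f₀ f₁ g₀ g₁ (fun p => ρ (1 - p.1, 1 - p.2)) := by
  obtain ⟨hnn, hint, h₀, h₁⟩ := isInvariantDensity_iff.1 hρ
  have hsq : Prod.map (fun x : ℝ => 1 - x) (fun x : ℝ => 1 - x) ⁻¹' (Icc 0 1 ×ˢ Icc 0 1) =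
      Icc 0 1 ×ˢ Icc 0 1 := by
    rw [preimage_prod_map_prod, preimage_const_sub_Icc, sub_zero, sub_self]
  have hR := (Measure.measurePreserving_sub_left volume (1:ℝ)).prod
    (Measure.measurePreserving_sub_left volume (1:ℝ))
  have hRe := (MeasurableEquiv.subLeft (1:ℝ)).measurableEmbedding.prodMap
    (MeasurableEquiv.subLeft (1:ℝ)).measurableEmbedding
  refine isInvariantDensity_iff.2 ⟨fun p hp => hnn _ (by rw [← hsq] at hp; exact hp), ?_,
    (ae_perronFrobeniusEq_reflect_iff hf₁ hg₁).1 h₁,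
    (ae_perronFrobeniusEq_reflect_iff hf₁ hg₁).2 ?_⟩
  · rw [← hsq]
    exact (hR.integrableOn_comp_preimage hRe).2 hint
  · simpa only [sub_sub_cancel] using h₀

theorem IsInvariantDensity.swap {f₀ f₁ g₀ g₁ : ℝ → ℝ} {ρ : ℝ × ℝ → ℝ}
    (hf₁ : ∀ x, f₁ x = 1 - f₀ (1 - x)) (hg₁ : EqOn g₁ (fun x => 1 - g₀ (1 - x)) (Ioo 0 1))
    (hf₀ : MapsTo f₀ (Ioo 0 (1/2)) (Ioo 0 1)) (hg₀ : MapsTo g₀ (Ioo 0 1) (Ioo 0 (1/2)))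
    (hfg₀ : InvOn g₀ f₀ (Ioo 0 (1/2)) (Ioo 0 1))
    (hd₀ : ∀ y ∈ Ioo (0:ℝ) (1/2), deriv g₀ (f₀ y) * deriv f₀ y = 1)
    (hρ : IsInvariantDensity f₀ f₁ g₀ g₁ ρ) :
    IsInvariantDensity f₀ f₁ g₀ g₁ (fun p => ρ (p.2, p.1)) := by
  obtain ⟨hnn, hint, h₀, -⟩ := isInvariantDensity_iff.1 hρ
  obtain ⟨-, -, h₀', -⟩ := isInvariantDensity_iff.1 (hρ.reflect hf₁ hg₁)
  refine isInvariantDensity_iff.2 ⟨fun p hp => hnn _ ⟨hp.2, hp.1⟩, ?_,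
    ae_perronFrobeniusEq_swap measurableSet_Ioo measurableSet_Ioo hf₀ hg₀ hfg₀ hd₀ h₀,
    (ae_perronFrobeniusEq_reflect_iff hf₁ hg₁).2
      (ae_perronFrobeniusEq_swap measurableSet_Ioo measurableSet_Ioo hf₀ hg₀ hfg₀ hd₀ h₀')⟩
  rw [← preimage_swap_prod]
  exact (Measure.measurePreserving_swap.integrableOn_comp_preimage
    MeasurableEquiv.prodComm.measurableEmbedding).2 hint

theorem invariant_density_time_reversal_symmetry_general
    (α : ℝ) (hα : 1 < α)
    (f₀ f₁ g₀ g₁ : ℝ → ℝ)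
    (hf₀0 : f₀ 0 = 0) (hf₀half : f₀ (1/2) = 1)
    (hf₀deriv : ∀ x ∈ Icc (0:ℝ) (1/2), α ≤ deriv f₀ x)
    (hf₁ : ∀ x, f₁ x = 1 - f₀ (1 - x))
    (hg₀maps : MapsTo g₀ (Icc 0 1) (Icc 0 (1/2)))
    (hg₀left : ∀ x ∈ Icc (0:ℝ) (1/2), g₀ (f₀ x) = x)
    (hg₀right : ∀ y ∈ Icc (0:ℝ) 1, f₀ (g₀ y) = y)
    (hg₁left : ∀ x ∈ Icc (1/2:ℝ) 1, g₁ (f₁ x) = x)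
    (ρ : ℝ × ℝ → ℝ)
    (hρ : IsInvariantDensity f₀ f₁ g₀ g₁ ρ) :
    IsInvariantDensity f₀ f₁ g₀ g₁ (fun p => ρ (p.2, p.1)) ∧
      IsInvariantDensity f₀ f₁ g₀ g₁ (fun p => ρ (1 - p.2, 1 - p.1)) := by
  have hpos : ∀ x ∈ Icc (0:ℝ) (1/2), 0 < deriv f₀ x := fun x hx => by linarith [hf₀deriv x hx]
  have hmono := strictMonoOn_of_forall_deriv_pos (convex_Icc _ _) hpos
  have hf₀I : MapsTo f₀ (Ioo 0 (1/2)) (Ioo 0 1) := by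
    simpa only [hf₀0, hf₀half] using hmono.mapsTo_Ioo
  have hg₀I : MapsTo g₀ (Ioo 0 1) (Ioo 0 (1/2)) := hg₀maps.Ioo_of_rightInvOn hg₀right hf₀0 hf₀half
  have hfg₀ : InvOn g₀ f₀ (Ioo 0 (1/2)) (Ioo 0 1) :=
    ⟨fun y hy => hg₀left y (Ioo_subset_Icc_self hy),
      fun x hx => hg₀right x (Ioo_subset_Icc_self hx)⟩
  have hd₀ : ∀ y ∈ Ioo (0:ℝ) (1/2), deriv g₀ (f₀ y) * deriv f₀ y = 1 := fun y hy =>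
    hfg₀.deriv_mul_deriv_eq_one isOpen_Ioo isOpen_Ioo (hmono.mono Ioo_subset_Icc_self) hf₀I hg₀I
      hy (hpos y (Ioo_subset_Icc_self hy)).ne'
  have hg₁ := (eqOn_one_sub_of_leftInvOn hf₁ hg₁left hg₀maps hg₀right).mono Ioo_subset_Icc_self
  exact ⟨hρ.swap hf₁ hg₁ hf₀I hg₀I hfg₀ hd₀, (hρ.reflect hf₁ hg₁).swap hf₁ hg₁ hf₀I hg₀I hfg₀ hd₀⟩

/-- If `ρ` is an invariant density for `F`, then so are
`(x,y) ↦ ρ(y,x)` and `(x,y) ↦ ρ(1-y,1-x)`. -/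
theorem invariant_density_time_reversal_symmetry
    (α : ℝ) (hα : 1 < α)
    (f₀ f₁ g₀ g₁ : ℝ → ℝ)
    (hf₀C : ContDiffOn ℝ 2 f₀ (Icc 0 (1/2)))
    (hf₀0 : f₀ 0 = 0) (hf₀half : f₀ (1/2) = 1)
    (hf₀deriv : ∀ x ∈ Icc (0:ℝ) (1/2), α ≤ deriv f₀ x)
    (hf₀maps : MapsTo f₀ (Icc 0 (1/2)) (Icc 0 1))
    (hf₁ : ∀ x, f₁ x = 1 - f₀ (1 - x))
    (hg₀maps : MapsTo g₀ (Icc 0 1) (Icc 0 (1/2)))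
    (hg₁maps : MapsTo g₁ (Icc 0 1) (Icc (1/2) 1))
    (hg₀left : ∀ x ∈ Icc (0:ℝ) (1/2), g₀ (f₀ x) = x)
    (hg₀right : ∀ y ∈ Icc (0:ℝ) 1, f₀ (g₀ y) = y)
    (hg₁left : ∀ x ∈ Icc (1/2:ℝ) 1, g₁ (f₁ x) = x)
    (hg₁right : ∀ y ∈ Icc (0:ℝ) 1, f₁ (g₁ y) = y)
    (ρ : ℝ × ℝ → ℝ)
    (hρ : IsInvariantDensity f₀ f₁ g₀ g₁ ρ) :
    IsInvariantDensity f₀ f₁ g₀ g₁ (fun p => ρ (p.2, p.1)) ∧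
      IsInvariantDensity f₀ f₁ g₀ g₁ (fun p => ρ (1 - p.2, 1 - p.1)) :=
  invariant_density_time_reversal_symmetry_general α hα f₀ f₁ g₀ g₁ hf₀0 hf₀half hf₀deriv hf₁
    hg₀maps hg₀left hg₀right hg₁left ρ hρ
end

section
/- If a nonnegative integrable function ρ on [0,1]² is an invariant density for F, then for a.e. y ∈ [0,1]: ∫₀¹ ρ(x, g₀(y)) dx = f₀'(g₀(y)) · ∫₀^{1/2} ρ(x,y) dx and ∫₀¹ ρ(x, g₁(y)) dx = f₁'(g₁(y)) · ∫_{1/2}¹ ρ(x,y) dx. -/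
open Set MeasureTheory

/-- Key auxiliary lemma: for a branch `f : [a,b] → [0,1]` with derivative at least `α > 1`
and two-sided inverse `g`, we record: (1) preimages under `g` of null sets are null within
`[0,1]`; (2) `g` is differentiable on `(0,1)` with derivative `(f' (g y))⁻¹`;
(3) the change-of-variables formula for `g`. -/
theorem triangular_key (α a b : ℝ) (hα : 1 < α) (hab : a < b)
    (f g : ℝ → ℝ)
    (hcont : ContinuousOn f (Icc a b))
    (hder : ∀ x ∈ Icc a b, HasDerivAt f (deriv f x) x)
    (hpos : ∀ x ∈ Icc a b, α ≤ deriv f x)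
    (hfa : f a = 0) (hfb : f b = 1)
    (hgmaps : MapsTo g (Icc 0 1) (Icc a b))
    (hgl : ∀ x ∈ Icc a b, g (f x) = x)
    (hgr : ∀ y ∈ Icc (0:ℝ) 1, f (g y) = y) :
    (∀ N : Set ℝ, volume N = 0 → volume {y | y ∈ Icc (0:ℝ) 1 ∧ g y ∈ N} = 0) ∧
    (∀ y ∈ Ioo (0:ℝ) 1, HasDerivAt g ((deriv f (g y))⁻¹) y) ∧
    (∀ φ : ℝ → ℝ, (∫ x in Ioo (0:ℝ) 1, |deriv g x| * φ (g x)) = ∫ u in Ioo a b, φ u) := by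
  have hα0 : (0:ℝ) < α := lt_trans one_pos hα
  have hdpos : ∀ x ∈ Icc a b, 0 < deriv f x := fun x hx => lt_of_lt_of_le hα0 (hpos x hx)
  have hmono : StrictMonoOn f (Icc a b) := by
    apply strictMonoOn_of_deriv_pos (convex_Icc a b) hcont
    intro x hx
    rw [interior_Icc] at hx
    exact hdpos x (Ioo_subset_Icc_self hx)
  -- mean value bound
  have hslope : ∀ u ∈ Icc a b, ∀ v ∈ Icc a b, u ≤ v → α * (v - u) ≤ f v - f u := by
    intro u hu v hv huv
    rcases eq_or_lt_of_le huv with rfl | hlt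
    · simp
    · have hsub : Icc u v ⊆ Icc a b := Icc_subset_Icc hu.1 hv.2
      obtain ⟨c, hc, hceq⟩ := exists_hasDerivAt_eq_slope f (deriv f) hlt (hcont.mono hsub)
        (fun x hx => hder x (hsub (Ioo_subset_Icc_self hx)))
      have hcmem : c ∈ Icc a b := hsub (Ioo_subset_Icc_self hc)
      have : α ≤ (f v - f u) / (v - u) := hceq ▸ hpos c hcmem
      have hvu : 0 < v - u := sub_pos.2 hlt
      calc α * (v - u) ≤ ((f v - f u) / (v - u)) * (v - u) := by
            exact mul_le_mul_of_nonneg_right this hvu.le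
        _ = f v - f u := by field_simp
  -- g is monotone and Lipschitz
  have hkey : ∀ y₁ ∈ Icc (0:ℝ) 1, ∀ y₂ ∈ Icc (0:ℝ) 1, y₁ ≤ y₂ →
      g y₁ ≤ g y₂ ∧ g y₂ - g y₁ ≤ α⁻¹ * (y₂ - y₁) := by
    intro y₁ h₁ y₂ h₂ h12
    have hg₁ := hgmaps h₁
    have hg₂ := hgmaps h₂
    have hle : g y₁ ≤ g y₂ := by
      by_contra h
      push_neg at h
      have := hslope _ hg₂ _ hg₁ h.le
      rw [hgr _ h₁, hgr _ h₂] at this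
      nlinarith
    refine ⟨hle, ?_⟩
    have := hslope _ hg₁ _ hg₂ hle
    rw [hgr _ h₁, hgr _ h₂] at this
    rw [inv_mul_eq_div, le_div_iff₀ hα0]
    nlinarith
  have hglip : LipschitzOnWith (Real.toNNReal α⁻¹) g (Icc (0:ℝ) 1) := by
    rw [lipschitzOnWith_iff_dist_le_mul]
    intro y₁ h₁ y₂ h₂
    rw [Real.dist_eq, Real.dist_eq, Real.coe_toNNReal _ (inv_nonneg.2 hα0.le)]
    rcases le_total y₁ y₂ with h | h
    · obtain ⟨hle, hb⟩ := hkey y₁ h₁ y₂ h₂ h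
      rw [abs_of_nonpos (by linarith), abs_of_nonpos (by linarith)]
      linarith
    · obtain ⟨hle, hb⟩ := hkey y₂ h₂ y₁ h₁ h
      rw [abs_of_nonneg (by linarith), abs_of_nonneg (by linarith)]
      linarith
  have hgcont : ContinuousOn g (Icc (0:ℝ) 1) := hglip.continuousOn
  have hgderiv : ∀ y ∈ Ioo (0:ℝ) 1, HasDerivAt g ((deriv f (g y))⁻¹) y := by
    intro y hy
    have hyI : y ∈ Icc (0:ℝ) 1 := Ioo_subset_Icc_self hy
    have hca : ContinuousAt g y :=
      (hgcont y hyI).continuousAt (Icc_mem_nhds hy.1 hy.2)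
    exact HasDerivAt.of_local_left_inverse hca (hder _ (hgmaps hyI))
      (ne_of_gt (hdpos _ (hgmaps hyI)))
      (Filter.eventually_of_mem (isOpen_Ioo.mem_nhds hy)
        (fun z hz => hgr z (Ioo_subset_Icc_self hz)))
  refine ⟨?_, hgderiv, ?_⟩
  · -- null preimage
    intro N hN
    set t := toMeasurable volume N with ht
    have htN : volume t = 0 := by rw [ht, measure_toMeasurable]; exact hN
    have hsub : {y | y ∈ Icc (0:ℝ) 1 ∧ g y ∈ N} ⊆ f '' (t ∩ Icc a b) := by
      rintro y ⟨hy, hgy⟩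
      exact ⟨g y, ⟨subset_toMeasurable _ _ hgy, hgmaps hy⟩, hgr y hy⟩
    refine measure_mono_null hsub ?_
    apply addHaar_image_eq_zero_of_differentiableOn_of_addHaar_eq_zero volume
    · exact fun x hx => ((hder x hx.2).differentiableAt).differentiableWithinAt
    · exact measure_mono_null inter_subset_left htN
  · -- change of variables
    intro φ
    have himg : g '' Ioo (0:ℝ) 1 = Ioo a b := by
      ext u
      constructor
      · rintro ⟨y, hy, rfl⟩
        have hyI : y ∈ Icc (0:ℝ) 1 := Ioo_subset_Icc_self hy
        have hgy := hgmaps hyI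
        refine ⟨lt_of_le_of_ne hgy.1 ?_, lt_of_le_of_ne hgy.2 ?_⟩
        · intro h
          have : y = 0 := by rw [← hgr y hyI, ← h, hfa]
          exact hy.1.ne' this
        · intro h
          have : y = 1 := by rw [← hgr y hyI, h, hfb]
          exact hy.2.ne this
      · intro hu
        have huI : u ∈ Icc a b := Ioo_subset_Icc_self hu
        have h1 : 0 < f u := by
          rw [← hfa]; exact hmono (left_mem_Icc.2 hab.le) huI hu.1
        have h2 : f u < 1 := by
          rw [← hfb]; exact hmono huI (right_mem_Icc.2 hab.le) hu.2
        exact ⟨f u, ⟨h1, h2⟩, hgl u huI⟩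
    have hinj : InjOn g (Ioo (0:ℝ) 1) := by
      intro y₁ h₁ y₂ h₂ he
      rw [← hgr y₁ (Ioo_subset_Icc_self h₁), ← hgr y₂ (Ioo_subset_Icc_self h₂), he]
    have hg' : ∀ x ∈ Ioo (0:ℝ) 1, HasDerivWithinAt g (deriv g x) (Ioo (0:ℝ) 1) x := by
      intro x hx
      rw [(hgderiv x hx).deriv]
      exact (hgderiv x hx).hasDerivWithinAt
    have := integral_image_eq_integral_abs_deriv_smul measurableSet_Ioo hg' hinj φ
    rw [himg] at this
    rw [this]
    rfl

/-- If `ρ` is an invariant density for `F`, then for a.e.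
`y ∈ [0,1]`, `∫₀¹ ρ(x, g₀ y) dx = f₀'(g₀ y) ∫₀^{1/2} ρ(x,y) dx` and
`∫₀¹ ρ(x, g₁ y) dx = f₁'(g₁ y) ∫_{1/2}¹ ρ(x,y) dx`. -/
theorem invariant_density_marginal_halves
    (α : ℝ) (hα : 1 < α)
    (f₀ f₁ g₀ g₁ : ℝ → ℝ)
    (hf₀C : ContDiffOn ℝ 2 f₀ (Icc 0 (1/2)))
    (hf₀0 : f₀ 0 = 0) (hf₀half : f₀ (1/2) = 1)
    (hf₀deriv : ∀ x ∈ Icc (0:ℝ) (1/2), α ≤ deriv f₀ x)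
    (hf₀maps : MapsTo f₀ (Icc 0 (1/2)) (Icc 0 1))
    (hf₁ : ∀ x, f₁ x = 1 - f₀ (1 - x))
    (hg₀maps : MapsTo g₀ (Icc 0 1) (Icc 0 (1/2)))
    (hg₁maps : MapsTo g₁ (Icc 0 1) (Icc (1/2) 1))
    (hg₀left : ∀ x ∈ Icc (0:ℝ) (1/2), g₀ (f₀ x) = x)
    (hg₀right : ∀ y ∈ Icc (0:ℝ) 1, f₀ (g₀ y) = y)
    (hg₁left : ∀ x ∈ Icc (1/2:ℝ) 1, g₁ (f₁ x) = x)
    (hg₁right : ∀ y ∈ Icc (0:ℝ) 1, f₁ (g₁ y) = y)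
    (ρ : ℝ × ℝ → ℝ)
    (hρ : IsInvariantDensity f₀ f₁ g₀ g₁ ρ) :
    ∀ᵐ y ∂(volume.restrict (Icc (0:ℝ) 1)),
      (∫ x in Icc (0:ℝ) 1, ρ (x, g₀ y)) =
          deriv f₀ (g₀ y) * ∫ x in Icc (0:ℝ) (1/2), ρ (x, y) ∧
      (∫ x in Icc (0:ℝ) 1, ρ (x, g₁ y)) =
          deriv f₁ (g₁ y) * ∫ x in Icc (1/2:ℝ) 1, ρ (x, y) := by
  have hα0 : (0:ℝ) < α := lt_trans one_pos hα
  -- differentiability of f₀ on the closed interval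
  have hder₀ : ∀ x ∈ Icc (0:ℝ) (1/2), HasDerivAt f₀ (deriv f₀ x) x := by
    intro x hx
    by_cases h : DifferentiableAt ℝ f₀ x
    · exact h.hasDerivAt
    · exfalso
      have := hf₀deriv x hx
      rw [deriv_zero_of_not_differentiableAt h] at this
      linarith
  -- derivative of f₁
  have hder₁pre : ∀ x ∈ Icc (1/2:ℝ) 1, HasDerivAt f₁ (deriv f₀ (1 - x)) x := by
    intro x hx
    have h1x : 1 - x ∈ Icc (0:ℝ) (1/2) := ⟨by linarith [hx.2], by linarith [hx.1]⟩
    have hlin : HasDerivAt (fun y : ℝ => 1 - y) (-1) x := by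
      simpa using (hasDerivAt_id x).const_sub 1
    have hcomp : HasDerivAt (fun y : ℝ => f₀ (1 - y)) (deriv f₀ (1 - x) * (-1)) x :=
      (hder₀ _ h1x).comp x hlin
    have : HasDerivAt (fun y : ℝ => 1 - f₀ (1 - y)) (-(deriv f₀ (1 - x) * (-1))) x :=
      hcomp.const_sub 1
    have hfeq : f₁ = fun y : ℝ => 1 - f₀ (1 - y) := funext hf₁
    rw [hfeq]
    simpa using this
  have hder₁ : ∀ x ∈ Icc (1/2:ℝ) 1, HasDerivAt f₁ (deriv f₁ x) x := by
    intro x hx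
    rw [(hder₁pre x hx).deriv]
    exact hder₁pre x hx
  have hf₁deriv : ∀ x ∈ Icc (1/2:ℝ) 1, α ≤ deriv f₁ x := by
    intro x hx
    rw [(hder₁pre x hx).deriv]
    exact hf₀deriv _ ⟨by linarith [hx.2], by linarith [hx.1]⟩
  have hf₁a : f₁ (1/2) = 0 := by rw [hf₁]; norm_num [hf₀half]
  have hf₁b : f₁ 1 = 1 := by rw [hf₁]; simp [hf₀0]
  have hcont₁ : ContinuousOn f₁ (Icc (1/2:ℝ) 1) :=
    fun x hx => (hder₁ x hx).continuousAt.continuousWithinAt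
  have key₀ := triangular_key α 0 (1/2) hα (by norm_num) f₀ g₀ hf₀C.continuousOn hder₀
    hf₀deriv hf₀0 hf₀half hg₀maps hg₀left hg₀right
  have key₁ := triangular_key α (1/2) 1 hα (by norm_num) f₁ g₁ hcont₁ hder₁
    hf₁deriv hf₁a hf₁b hg₁maps hg₁left hg₁right
  obtain ⟨hρpos, hρint, hae⟩ := hρ
  -- Fubini: a.e. in y, a.e. in x
  have hae' : ∀ᵐ p ∂((volume.restrict (Icc (0:ℝ) 1)).prod (volume.restrict (Icc (0:ℝ) 1))),
      (p.2 < 1/2 → ρ p = deriv g₀ p.1 * deriv f₀ p.2 * ρ (g₀ p.1, f₀ p.2)) ∧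
      (1/2 ≤ p.2 → ρ p = deriv g₁ p.1 * deriv f₁ p.2 * ρ (g₁ p.1, f₁ p.2)) := by
    rw [Measure.prod_restrict]
    exact hae
  have hswap : ∀ᵐ q ∂((volume.restrict (Icc (0:ℝ) 1)).prod (volume.restrict (Icc (0:ℝ) 1))),
      (q.1 < 1/2 → ρ (q.2, q.1) = deriv g₀ q.2 * deriv f₀ q.1 * ρ (g₀ q.2, f₀ q.1)) ∧
      (1/2 ≤ q.1 → ρ (q.2, q.1) = deriv g₁ q.2 * deriv f₁ q.1 * ρ (g₁ q.2, f₁ q.1)) :=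
    Measure.measurePreserving_swap.quasiMeasurePreserving.ae hae'
  have h2 : ∀ᵐ y ∂(volume.restrict (Icc (0:ℝ) 1)), ∀ᵐ x ∂(volume.restrict (Icc (0:ℝ) 1)),
      (y < 1/2 → ρ (x, y) = deriv g₀ x * deriv f₀ y * ρ (g₀ x, f₀ y)) ∧
      (1/2 ≤ y → ρ (x, y) = deriv g₁ x * deriv f₁ y * ρ (g₁ x, f₁ y)) :=
    Measure.ae_ae_of_ae_prod hswap
  -- the bad set
  have hN : volume ({y' | ¬ (∀ᵐ x ∂(volume.restrict (Icc (0:ℝ) 1)),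
      (y' < 1/2 → ρ (x, y') = deriv g₀ x * deriv f₀ y' * ρ (g₀ x, f₀ y')) ∧
      (1/2 ≤ y' → ρ (x, y') = deriv g₁ x * deriv f₁ y' * ρ (g₁ x, f₁ y')))} ∩ Icc (0:ℝ) 1) = 0 := by
    have := ae_iff.mp h2
    rwa [Measure.restrict_apply' measurableSet_Icc] at this
  set N := {y' | ¬ (∀ᵐ x ∂(volume.restrict (Icc (0:ℝ) 1)),
      (y' < 1/2 → ρ (x, y') = deriv g₀ x * deriv f₀ y' * ρ (g₀ x, f₀ y')) ∧
      (1/2 ≤ y' → ρ (x, y') = deriv g₁ x * deriv f₁ y' * ρ (g₁ x, f₁ y')))} ∩ Icc (0:ℝ) 1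
    with hNdef
  have hg₀N := key₀.1 N hN
  have hg₁N := key₁.1 N hN
  have hIoo : ∀ᵐ y ∂(volume.restrict (Icc (0:ℝ) 1)), y ∈ Ioo (0:ℝ) 1 := by
    rw [ae_iff, Measure.restrict_apply' measurableSet_Icc]
    refine measure_mono_null (fun y hy => ?_) (((Set.finite_singleton (1:ℝ)).insert 0).measure_zero volume)
    simp only [mem_inter_iff, mem_setOf_eq, mem_Icc] at hy
    obtain ⟨hni, h0, h1⟩ := hy
    have : y = 0 ∨ y = 1 := by
      by_contra h
      push_neg at h
      exact hni ⟨lt_of_le_of_ne h0 (Ne.symm h.1), lt_of_le_of_ne h1 h.2⟩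
    simpa using this
  have hg₀ae : ∀ᵐ y ∂(volume.restrict (Icc (0:ℝ) 1)), ¬ (y ∈ Icc (0:ℝ) 1 ∧ g₀ y ∈ N) := by
    rw [ae_iff, Measure.restrict_apply' measurableSet_Icc]
    refine measure_mono_null (fun y hy => ?_) hg₀N
    simp only [mem_inter_iff, mem_setOf_eq, not_not] at hy ⊢
    exact hy.1
  have hg₁ae : ∀ᵐ y ∂(volume.restrict (Icc (0:ℝ) 1)), ¬ (y ∈ Icc (0:ℝ) 1 ∧ g₁ y ∈ N) := by
    rw [ae_iff, Measure.restrict_apply' measurableSet_Icc]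
    refine measure_mono_null (fun y hy => ?_) hg₁N
    simp only [mem_inter_iff, mem_setOf_eq, not_not] at hy ⊢
    exact hy.1
  filter_upwards [hIoo, hg₀ae, hg₁ae] with y hy hg₀y hg₁y
  have hyI : y ∈ Icc (0:ℝ) 1 := Ioo_subset_Icc_self hy
  have hQ₀ : ∀ᵐ x ∂(volume.restrict (Icc (0:ℝ) 1)),
      (g₀ y < 1/2 → ρ (x, g₀ y) = deriv g₀ x * deriv f₀ (g₀ y) * ρ (g₀ x, f₀ (g₀ y))) ∧
      (1/2 ≤ g₀ y → ρ (x, g₀ y) = deriv g₁ x * deriv f₁ (g₀ y) * ρ (g₁ x, f₁ (g₀ y))) := by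
    by_contra h
    exact hg₀y ⟨hyI, ⟨h, Icc_subset_Icc_right (by norm_num) (hg₀maps hyI)⟩⟩
  have hQ₁ : ∀ᵐ x ∂(volume.restrict (Icc (0:ℝ) 1)),
      (g₁ y < 1/2 → ρ (x, g₁ y) = deriv g₀ x * deriv f₀ (g₁ y) * ρ (g₀ x, f₀ (g₁ y))) ∧
      (1/2 ≤ g₁ y → ρ (x, g₁ y) = deriv g₁ x * deriv f₁ (g₁ y) * ρ (g₁ x, f₁ (g₁ y))) := by
    by_contra h
    exact hg₁y ⟨hyI, ⟨h, Icc_subset_Icc_left (by norm_num) (hg₁maps hyI)⟩⟩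
  constructor
  · -- first component
    have hlt : g₀ y < 1/2 := by
      refine lt_of_le_of_ne (hg₀maps hyI).2 (fun h => ?_)
      have : y = 1 := by rw [← hg₀right y hyI, h, hf₀half]
      exact hy.2.ne this
    have hQ : ∀ᵐ x ∂(volume.restrict (Icc (0:ℝ) 1)),
        ρ (x, g₀ y) = deriv g₀ x * deriv f₀ (g₀ y) * ρ (g₀ x, y) := by
      filter_upwards [hQ₀] with x hx
      have := hx.1 hlt
      rwa [hg₀right y hyI] at this
    calc (∫ x in Icc (0:ℝ) 1, ρ (x, g₀ y))
        = ∫ x in Icc (0:ℝ) 1, deriv g₀ x * deriv f₀ (g₀ y) * ρ (g₀ x, y) :=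
          integral_congr_ae hQ
      _ = ∫ x in Ioo (0:ℝ) 1, deriv g₀ x * deriv f₀ (g₀ y) * ρ (g₀ x, y) :=
          integral_Icc_eq_integral_Ioo
      _ = ∫ x in Ioo (0:ℝ) 1, deriv f₀ (g₀ y) * (|deriv g₀ x| * ρ (g₀ x, y)) := by
          refine setIntegral_congr_fun measurableSet_Ioo (fun x hx => ?_)
          have hd : deriv g₀ x = (deriv f₀ (g₀ x))⁻¹ := (key₀.2.1 x hx).deriv
          have hge : 0 ≤ deriv g₀ x := by
            rw [hd]
            exact inv_nonneg.2 (le_trans hα0.le (hf₀deriv _ (hg₀maps (Ioo_subset_Icc_self hx))))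
          rw [abs_of_nonneg hge]
          ring
      _ = deriv f₀ (g₀ y) * ∫ x in Ioo (0:ℝ) 1, |deriv g₀ x| * ρ (g₀ x, y) :=
          integral_const_mul _ _
      _ = deriv f₀ (g₀ y) * ∫ u in Ioo (0:ℝ) (1/2), ρ (u, y) := by
          rw [key₀.2.2 (fun u => ρ (u, y))]
      _ = deriv f₀ (g₀ y) * ∫ u in Icc (0:ℝ) (1/2), ρ (u, y) := by
          rw [integral_Icc_eq_integral_Ioo]
  · -- second component
    have hge12 : (1:ℝ)/2 ≤ g₁ y := (hg₁maps hyI).1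
    have hQ : ∀ᵐ x ∂(volume.restrict (Icc (0:ℝ) 1)),
        ρ (x, g₁ y) = deriv g₁ x * deriv f₁ (g₁ y) * ρ (g₁ x, y) := by
      filter_upwards [hQ₁] with x hx
      have := hx.2 hge12
      rwa [hg₁right y hyI] at this
    calc (∫ x in Icc (0:ℝ) 1, ρ (x, g₁ y))
        = ∫ x in Icc (0:ℝ) 1, deriv g₁ x * deriv f₁ (g₁ y) * ρ (g₁ x, y) :=
          integral_congr_ae hQ
      _ = ∫ x in Ioo (0:ℝ) 1, deriv g₁ x * deriv f₁ (g₁ y) * ρ (g₁ x, y) :=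
          integral_Icc_eq_integral_Ioo
      _ = ∫ x in Ioo (0:ℝ) 1, deriv f₁ (g₁ y) * (|deriv g₁ x| * ρ (g₁ x, y)) := by
          refine setIntegral_congr_fun measurableSet_Ioo (fun x hx => ?_)
          have hd : deriv g₁ x = (deriv f₁ (g₁ x))⁻¹ := (key₁.2.1 x hx).deriv
          have hge : 0 ≤ deriv g₁ x := by
            rw [hd]
            exact inv_nonneg.2 (le_trans hα0.le (hf₁deriv _ (hg₁maps (Ioo_subset_Icc_self hx))))
          rw [abs_of_nonneg hge]
          ring
      _ = deriv f₁ (g₁ y) * ∫ x in Ioo (0:ℝ) 1, |deriv g₁ x| * ρ (g₁ x, y) :=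
          integral_const_mul _ _
      _ = deriv f₁ (g₁ y) * ∫ u in Ioo (1/2:ℝ) 1, ρ (u, y) := by
          rw [key₁.2.2 (fun u => ρ (u, y))]
      _ = deriv f₁ (g₁ y) * ∫ u in Icc (1/2:ℝ) 1, ρ (u, y) := by
          rw [integral_Icc_eq_integral_Ioo]
end

section
/- If a nonnegative integrable function ρ on [0,1]² is an invariant density for F, then both of its marginals ζ(x) := ∫₀¹ ρ(x,y) dy and η(y) := ∫₀¹ ρ(x,y) dx satisfy the one-dimensional Perron–Frobenius equation: ζ(x) = g₀'(x) ζ(g₀(x)) + g₁'(x) ζ(g₁(x)) for a.e. x, and η(y) = g₀'(y) η(g₀(y)) + g₁'(y) η(g₁(y)) for a.e. y. -/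
open Set MeasureTheory

/-- Auxiliary structure packaging the hypotheses shared by the two branches
`(f₀, g₀)` on `[0, 1/2]` and `(f₁, g₁)` on `[1/2, 1]`. -/
structure AuxExpandingPair (α : ℝ) (f g : ℝ → ℝ) (a b : ℝ) : Prop where
  hα : 1 < α
  hab : a < b
  hsub : Icc a b ⊆ Icc 0 1
  hMVT : ∀ x ∈ Icc a b, ∀ y ∈ Icc a b, x ≤ y → α * (y - x) ≤ f y - f x
  hder : ∀ x ∈ Ioo a b, HasDerivAt f (deriv f x) x
  hderge : ∀ x ∈ Ioo a b, α ≤ deriv f x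
  hfa : f a = 0
  hfb : f b = 1
  hg : MapsTo g (Icc 0 1) (Icc a b)
  hgl : ∀ x ∈ Icc a b, g (f x) = x
  hgr : ∀ y ∈ Icc (0:ℝ) 1, f (g y) = y

namespace AuxExpandingPair

variable {α : ℝ} {f g : ℝ → ℝ} {a b : ℝ} (h : AuxExpandingPair α f g a b)
include h

lemma αpos : 0 < α := lt_trans one_pos h.hα

lemma strictMonoOn : StrictMonoOn f (Icc a b) := by
  intro x hx y hy hxy
  have := h.hMVT x hx y hy hxy.le
  nlinarith [h.αpos]

lemma injOn_f : InjOn f (Icc a b) := h.strictMonoOn.injOn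

lemma injOn_g : InjOn g (Icc (0:ℝ) 1) := by
  intro y1 h1 y2 h2 he
  rw [← h.hgr y1 h1, ← h.hgr y2 h2, he]

lemma g_mem {z : ℝ} (hz : z ∈ Ioo (0:ℝ) 1) : g z ∈ Ioo a b := by
  have hm := h.hg (Ioo_subset_Icc_self hz)
  rcases lt_or_eq_of_le hm.1 with h1 | h1
  · rcases lt_or_eq_of_le hm.2 with h2 | h2
    · exact ⟨h1, h2⟩
    · exfalso
      have := h.hgr z (Ioo_subset_Icc_self hz)
      rw [h2, h.hfb] at this
      exact (ne_of_lt hz.2) this.symm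
  · exfalso
    have := h.hgr z (Ioo_subset_Icc_self hz)
    rw [← h1, h.hfa] at this
    exact (ne_of_gt hz.1) this.symm

lemma image_f : f '' Ioo a b = Ioo (0:ℝ) 1 := by
  ext z
  constructor
  · rintro ⟨y, hy, rfl⟩
    constructor
    · have := h.strictMonoOn (left_mem_Icc.2 h.hab.le) (Ioo_subset_Icc_self hy) hy.1
      rwa [h.hfa] at this
    · have := h.strictMonoOn (Ioo_subset_Icc_self hy) (right_mem_Icc.2 h.hab.le) hy.2
      rwa [h.hfb] at this
  · intro hz
    exact ⟨g z, h.g_mem hz, h.hgr z (Ioo_subset_Icc_self hz)⟩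

lemma f_mem {x : ℝ} (hx : x ∈ Ioo a b) : f x ∈ Ioo (0:ℝ) 1 :=
  h.image_f ▸ mem_image_of_mem f hx

lemma image_g : g '' Ioo (0:ℝ) 1 = Ioo a b := by
  ext u
  constructor
  · rintro ⟨z, hz, rfl⟩
    exact h.g_mem hz
  · intro hu
    exact ⟨f u, h.f_mem hu, h.hgl u (Ioo_subset_Icc_self hu)⟩

lemma continuousOn_g : ContinuousOn g (Icc (0:ℝ) 1) := by
  have key : ∀ y1 ∈ Icc (0:ℝ) 1, ∀ y2 ∈ Icc (0:ℝ) 1, g y2 ≤ g y1 →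
      |g y1 - g y2| ≤ α⁻¹ * |y1 - y2| := by
    intro y1 h1 y2 h2 hc
    have h3 := h.hMVT (g y2) (h.hg h2) (g y1) (h.hg h1) hc
    rw [h.hgr y1 h1, h.hgr y2 h2] at h3
    have hα0 : (0:ℝ) < α := h.αpos
    rw [abs_of_nonneg (by linarith)]
    have h4 : g y1 - g y2 ≤ α⁻¹ * (y1 - y2) := by
      rw [← div_eq_inv_mul, le_div_iff₀ hα0, mul_comm]
      exact h3
    calc g y1 - g y2 ≤ α⁻¹ * (y1 - y2) := h4
      _ ≤ α⁻¹ * |y1 - y2| := by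
          apply mul_le_mul_of_nonneg_left (le_abs_self _)
          positivity
  have hlip : LipschitzOnWith (Real.toNNReal α⁻¹) g (Icc (0:ℝ) 1) := by
    apply LipschitzOnWith.of_dist_le_mul
    intro y1 h1 y2 h2
    rw [Real.dist_eq, Real.dist_eq, Real.coe_toNNReal _ (le_of_lt (inv_pos.mpr h.αpos))]
    rcases le_total (g y2) (g y1) with hc | hc
    · exact key y1 h1 y2 h2 hc
    · rw [abs_sub_comm (g y1), abs_sub_comm y1]
      exact key y2 h2 y1 h1 hc
  exact hlip.continuousOn

lemma g_hasDerivAt {z : ℝ} (hz : z ∈ Ioo (0:ℝ) 1) :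
    HasDerivAt g (deriv f (g z))⁻¹ z := by
  have hgz := h.g_mem hz
  refine HasDerivAt.of_local_left_inverse ?_ (h.hder (g z) hgz) ?_ ?_
  · exact (h.continuousOn_g.continuousWithinAt (Ioo_subset_Icc_self hz)).continuousAt
      (Icc_mem_nhds hz.1 hz.2)
  · have := h.hderge (g z) hgz
    intro hcon
    rw [hcon] at this
    linarith [h.αpos]
  · filter_upwards [Ioo_mem_nhds hz.1 hz.2] with y hy
    exact h.hgr y (Ioo_subset_Icc_self hy)

lemma g_deriv {z : ℝ} (hz : z ∈ Ioo (0:ℝ) 1) :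
    deriv g z = (deriv f (g z))⁻¹ :=
  (h.g_hasDerivAt hz).deriv

lemma f_deriv_pos {z : ℝ} (hz : z ∈ Ioo (0:ℝ) 1) : 0 < deriv f (g z) :=
  lt_of_lt_of_le h.αpos (h.hderge (g z) (h.g_mem hz))

lemma g_deriv_pos {z : ℝ} (hz : z ∈ Ioo (0:ℝ) 1) : 0 < deriv g z := by
  rw [h.g_deriv hz]
  exact inv_pos.mpr (h.f_deriv_pos hz)

lemma g_deriv_mul {z : ℝ} (hz : z ∈ Ioo (0:ℝ) 1) :
    deriv g z * deriv f (g z) = 1 := by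
  rw [h.g_deriv hz]
  exact inv_mul_cancel₀ (ne_of_gt (h.f_deriv_pos hz))

/-- Change of variables along `f`. -/
lemma cov_f (φ : ℝ → ℝ) :
    (∫ z in Ioo (0:ℝ) 1, φ z) = ∫ y in Ioo a b, deriv f y * φ (f y) := by
  have hcv := integral_image_eq_integral_abs_deriv_smul (measurableSet_Ioo (a := a) (b := b))
    (fun x hx => (h.hder x hx).hasDerivWithinAt) (h.injOn_f.mono Ioo_subset_Icc_self) φ
  rw [h.image_f] at hcv
  rw [hcv]
  apply setIntegral_congr_fun measurableSet_Ioo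
  intro y hy
  have hpos : 0 < deriv f y := lt_of_lt_of_le h.αpos (h.hderge y hy)
  simp [abs_of_pos hpos, smul_eq_mul]

/-- Change of variables along `g`. -/
lemma cov_g (φ : ℝ → ℝ) :
    (∫ u in Ioo a b, φ u) = ∫ x in Ioo (0:ℝ) 1, deriv g x * φ (g x) := by
  have hcv := integral_image_eq_integral_abs_deriv_smul (measurableSet_Ioo (a := (0:ℝ)) (b := 1))
    (fun x hx => (h.g_hasDerivAt hx).hasDerivWithinAt) ?_ φ
  · rw [h.image_g] at hcv
    rw [hcv]
    apply setIntegral_congr_fun measurableSet_Ioo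
    intro x hx
    show |(deriv f (g x))⁻¹| • φ (g x) = deriv g x * φ (g x)
    rw [h.g_deriv hx, abs_of_pos (inv_pos.mpr (h.f_deriv_pos hx)), smul_eq_mul]
  · exact h.injOn_g.mono Ioo_subset_Icc_self

/-- A property holding a.e. on `[0,1]` holds a.e. at `g z` for `z` a.e. in `(0,1)`. -/
lemma ae_comp {P : ℝ → Prop}
    (hP : ∀ᵐ y ∂(volume.restrict (Icc (0:ℝ) 1)), P y) :
    ∀ᵐ z ∂(volume.restrict (Ioo (0:ℝ) 1)), P (g z) := by
  have hN : volume ({y | ¬ P y} ∩ Icc (0:ℝ) 1) = 0 := by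
    have := ae_iff.mp hP
    rwa [Measure.restrict_apply' measurableSet_Icc] at this
  set M := {y | ¬ P y} ∩ Ioo a b with hMdef
  have hM : volume M = 0 := by
    apply measure_mono_null _ hN
    rintro y ⟨h1, h2⟩
    exact ⟨h1, h.hsub (Ioo_subset_Icc_self h2)⟩
  have hdiff : DifferentiableOn ℝ f M := fun y hy =>
    ((h.hder y hy.2).differentiableAt).differentiableWithinAt
  have himg : volume (f '' M) = 0 :=
    addHaar_image_eq_zero_of_differentiableOn_of_addHaar_eq_zero volume hdiff hM
  rw [ae_iff, Measure.restrict_apply' measurableSet_Ioo]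
  apply measure_mono_null _ himg
  rintro z ⟨hz1, hz2⟩
  refine ⟨g z, ⟨hz1, h.g_mem hz2⟩, h.hgr z (Ioo_subset_Icc_self hz2)⟩

end AuxExpandingPair

set_option maxHeartbeats 1000000 in
/-- Both marginals of an invariant density of `F` satisfy the
one-dimensional Perron–Frobenius equation of the interval map `f`. -/
theorem invariant_density_marginals_perron_frobenius
    (α : ℝ) (hα : 1 < α)
    (f₀ f₁ g₀ g₁ : ℝ → ℝ)
    (hf₀C : ContDiffOn ℝ 2 f₀ (Icc 0 (1/2)))
    (hf₀0 : f₀ 0 = 0) (hf₀half : f₀ (1/2) = 1)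
    (hf₀deriv : ∀ x ∈ Icc (0:ℝ) (1/2), α ≤ deriv f₀ x)
    (hf₀maps : MapsTo f₀ (Icc 0 (1/2)) (Icc 0 1))
    (hf₁ : ∀ x, f₁ x = 1 - f₀ (1 - x))
    (hg₀maps : MapsTo g₀ (Icc 0 1) (Icc 0 (1/2)))
    (hg₁maps : MapsTo g₁ (Icc 0 1) (Icc (1/2) 1))
    (hg₀left : ∀ x ∈ Icc (0:ℝ) (1/2), g₀ (f₀ x) = x)
    (hg₀right : ∀ y ∈ Icc (0:ℝ) 1, f₀ (g₀ y) = y)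
    (hg₁left : ∀ x ∈ Icc (1/2:ℝ) 1, g₁ (f₁ x) = x)
    (hg₁right : ∀ y ∈ Icc (0:ℝ) 1, f₁ (g₁ y) = y)
    (ρ : ℝ × ℝ → ℝ)
    (hρ : IsInvariantDensity f₀ f₁ g₀ g₁ ρ) :
    (∀ᵐ x ∂(volume.restrict (Icc (0:ℝ) 1)),
      (∫ y in Icc (0:ℝ) 1, ρ (x, y)) =
        deriv g₀ x * (∫ y in Icc (0:ℝ) 1, ρ (g₀ x, y)) +
          deriv g₁ x * (∫ y in Icc (0:ℝ) 1, ρ (g₁ x, y))) ∧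
    (∀ᵐ y ∂(volume.restrict (Icc (0:ℝ) 1)),
      (∫ x in Icc (0:ℝ) 1, ρ (x, y)) =
        deriv g₀ y * (∫ x in Icc (0:ℝ) 1, ρ (x, g₀ y)) +
          deriv g₁ y * (∫ x in Icc (0:ℝ) 1, ρ (x, g₁ y))) := by
  classical
  obtain ⟨-, hint, hae⟩ := hρ
  -- basic facts about `f₀`
  have hcont₀ : ContinuousOn f₀ (Icc 0 (1/2)) := hf₀C.continuousOn
  have hdiff₀ : ∀ x ∈ Ioo (0:ℝ) (1/2), DifferentiableAt ℝ f₀ x := by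
    intro x hx
    exact (hf₀C.differentiableOn (by norm_num)).differentiableAt (Icc_mem_nhds hx.1 hx.2)
  have hMVT₀ : ∀ x ∈ Icc (0:ℝ) (1/2), ∀ y ∈ Icc (0:ℝ) (1/2), x ≤ y →
      α * (y - x) ≤ f₀ y - f₀ x := by
    have := (convex_Icc (0:ℝ) (1/2)).mul_sub_le_image_sub_of_le_deriv hcont₀
      (by rw [interior_Icc]; exact fun x hx => (hdiff₀ x hx).differentiableWithinAt)
      (by rw [interior_Icc]; exact fun x hx => hf₀deriv x (Ioo_subset_Icc_self hx))
    exact this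
  have hder₀ : ∀ x ∈ Ioo (0:ℝ) (1/2), HasDerivAt f₀ (deriv f₀ x) x :=
    fun x hx => (hdiff₀ x hx).hasDerivAt
  have P₀ : AuxExpandingPair α f₀ g₀ 0 (1/2) :=
    { hα := hα, hab := by norm_num,
      hsub := fun t ht => ⟨ht.1, by linarith [ht.2]⟩,
      hMVT := hMVT₀, hder := hder₀,
      hderge := fun x hx => hf₀deriv x (Ioo_subset_Icc_self hx),
      hfa := hf₀0, hfb := hf₀half, hg := hg₀maps, hgl := hg₀left, hgr := hg₀right }
  -- basic facts about `f₁`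
  have hmem₁ : ∀ y ∈ Ioo (1/2:ℝ) 1, (1 - y) ∈ Ioo (0:ℝ) (1/2) :=
    fun y hy => ⟨by linarith [hy.2], by linarith [hy.1]⟩
  have hder₁' : ∀ y ∈ Ioo (1/2:ℝ) 1, HasDerivAt f₁ (deriv f₀ (1 - y)) y := by
    intro y hy
    have h0 : HasDerivAt f₀ (deriv f₀ (1 - y)) (1 - y) := hder₀ _ (hmem₁ y hy)
    have h1 : HasDerivAt (fun x : ℝ => 1 - x) (-1) y := by
      simpa using (hasDerivAt_id y).const_sub 1
    have h2 : HasDerivAt (fun x : ℝ => f₀ (1 - x)) (deriv f₀ (1 - y) * (-1)) y :=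
      HasDerivAt.comp y (by simpa using h0) h1
    have h3 : HasDerivAt (fun x : ℝ => 1 - f₀ (1 - x)) (-(deriv f₀ (1 - y) * (-1))) y :=
      h2.const_sub 1
    have h4 : (fun x : ℝ => 1 - f₀ (1 - x)) = f₁ := by funext x; rw [hf₁ x]
    rw [h4] at h3
    simpa using h3
  have hderiv₁eq : ∀ y ∈ Ioo (1/2:ℝ) 1, deriv f₁ y = deriv f₀ (1 - y) :=
    fun y hy => (hder₁' y hy).deriv
  have P₁ : AuxExpandingPair α f₁ g₁ (1/2) 1 :=
    { hα := hα, hab := by norm_num,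
      hsub := fun t ht => ⟨by linarith [ht.1], ht.2⟩,
      hMVT := by
        intro x hx y hy hxy
        rw [hf₁ x, hf₁ y]
        have h5 := hMVT₀ (1 - y) ⟨by linarith [hy.2], by linarith [hy.1]⟩ (1 - x)
          ⟨by linarith [hx.2], by linarith [hx.1]⟩ (by linarith)
        have e : α * ((1 - x) - (1 - y)) = α * (y - x) := by ring
        rw [e] at h5
        linarith
      hder := fun y hy => by rw [hderiv₁eq y hy]; exact hder₁' y hy
      hderge := fun y hy => by
        rw [hderiv₁eq y hy]
        exact hf₀deriv (1 - y) (Ioo_subset_Icc_self (hmem₁ y hy))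
      hfa := by rw [hf₁]; norm_num [hf₀half]
      hfb := by rw [hf₁]; norm_num [hf₀0]
      hg := hg₁maps, hgl := hg₁left, hgr := hg₁right }
  -- measure-theoretic plumbing
  have hIoo : volume.restrict (Ioo (0:ℝ) 1) = volume.restrict (Icc (0:ℝ) 1) :=
    Measure.restrict_congr_set Ioo_ae_eq_Icc
  have lift : ∀ {P : ℝ → Prop}, (∀ᵐ z ∂(volume.restrict (Ioo (0:ℝ) 1)), P z) →
      ∀ᵐ z ∂(volume.restrict (Icc (0:ℝ) 1)), P z := by
    intro P hp
    rwa [hIoo] at hp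
  have lower : ∀ {P : ℝ → Prop}, (∀ᵐ z ∂(volume.restrict (Icc (0:ℝ) 1)), P z) →
      ∀ᵐ z ∂(volume.restrict (Ioo (0:ℝ) 1)), P z := by
    intro P hp
    rwa [← hIoo] at hp
  have hprodeq : (volume.restrict (Icc (0:ℝ) 1)).prod (volume.restrict (Icc (0:ℝ) 1)) =
      volume.restrict (Icc (0:ℝ) 1 ×ˢ Icc (0:ℝ) 1) := by
    rw [Measure.prod_restrict, ← Measure.volume_eq_prod]
  have haeprod : ∀ᵐ p ∂((volume.restrict (Icc (0:ℝ) 1)).prod (volume.restrict (Icc (0:ℝ) 1))),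
      (p.2 < 1/2 → ρ p = deriv g₀ p.1 * deriv f₀ p.2 * ρ (g₀ p.1, f₀ p.2)) ∧
      (1/2 ≤ p.2 → ρ p = deriv g₁ p.1 * deriv f₁ p.2 * ρ (g₁ p.1, f₁ p.2)) := by
    rw [hprodeq]; exact hae
  have hint2 : Integrable ρ
      ((volume.restrict (Icc (0:ℝ) 1)).prod (volume.restrict (Icc (0:ℝ) 1))) := by
    rw [hprodeq]; exact hint
  -- splitting `[0,1]` into the two halves
  have hsplit : ∀ F : ℝ → ℝ, IntegrableOn F (Icc (0:ℝ) 1) volume →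
      (∫ t in Icc (0:ℝ) 1, F t) =
        (∫ t in Ioo (0:ℝ) (1/2), F t) + ∫ t in Ioo (1/2:ℝ) 1, F t := by
    intro F hF
    have hset : (Icc (0:ℝ) 1 : Set ℝ) =ᵐ[volume] (Ioo (0:ℝ) (1/2) ∪ Ioo (1/2:ℝ) 1 : Set ℝ) := by
      have h1 : (Icc (0:ℝ) 1 : Set ℝ) =ᵐ[volume] Ioo (0:ℝ) 1 := Ioo_ae_eq_Icc.symm
      have h2 : (Ioo (0:ℝ) 1 : Set ℝ) = Ioo (0:ℝ) (1/2) ∪ Ico (1/2:ℝ) 1 :=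
        (Ioo_union_Ico_eq_Ioo (by norm_num) (by norm_num)).symm
      have h3 : (Ioo (0:ℝ) (1/2) ∪ Ico (1/2:ℝ) 1 : Set ℝ) =ᵐ[volume]
          (Ioo (0:ℝ) (1/2) ∪ Ioo (1/2:ℝ) 1 : Set ℝ) :=
        Filter.EventuallyEq.union Filter.EventuallyEq.rfl Ioo_ae_eq_Ico.symm
      exact h1.trans (h2 ▸ h3)
    have hdis : Disjoint (Ioo (0:ℝ) (1/2)) (Ioo (1/2:ℝ) 1) :=
      Set.disjoint_left.mpr fun t h1 h2 => absurd h2.1 (not_lt.mpr h1.2.le)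
    have hi1 : IntegrableOn F (Ioo (0:ℝ) (1/2)) volume :=
      hF.mono_set fun t ht => ⟨ht.1.le, by linarith [ht.2]⟩
    have hi2 : IntegrableOn F (Ioo (1/2:ℝ) 1) volume :=
      hF.mono_set fun t ht => ⟨by linarith [ht.1], ht.2.le⟩
    rw [setIntegral_congr_set hset, setIntegral_union hdis measurableSet_Ioo hi1 hi2]
  constructor
  · -- first marginal
    have hx1 := Measure.ae_ae_of_ae_prod haeprod
    have hx2 := hint2.prod_right_ae
    apply lift
    have hx1' := lower hx1
    have hx2' := lower hx2
    filter_upwards [hx1', hx2', ae_restrict_mem measurableSet_Ioo] with x hQx hIx hx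
    have hQa : ∀ᵐ y ∂(volume.restrict (Ioo (0:ℝ) (1/2))),
        (y < 1/2 → ρ (x, y) = deriv g₀ x * deriv f₀ y * ρ (g₀ x, f₀ y)) ∧
        (1/2 ≤ y → ρ (x, y) = deriv g₁ x * deriv f₁ y * ρ (g₁ x, f₁ y)) :=
      ae_restrict_of_ae_restrict_of_subset (show Ioo (0:ℝ) (1/2) ⊆ Icc 0 1 from fun t ht => ⟨ht.1.le, by linarith [ht.2]⟩) hQx
    have hQb : ∀ᵐ y ∂(volume.restrict (Ioo (1/2:ℝ) 1)),
        (y < 1/2 → ρ (x, y) = deriv g₀ x * deriv f₀ y * ρ (g₀ x, f₀ y)) ∧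
        (1/2 ≤ y → ρ (x, y) = deriv g₁ x * deriv f₁ y * ρ (g₁ x, f₁ y)) :=
      ae_restrict_of_ae_restrict_of_subset (show Ioo (1/2:ℝ) 1 ⊆ Icc 0 1 from fun t ht => ⟨by linarith [ht.1], ht.2.le⟩) hQx
    have e₀ : (∫ y in Ioo (0:ℝ) (1/2), ρ (x, y)) =
        deriv g₀ x * ∫ y in Icc (0:ℝ) 1, ρ (g₀ x, y) := by
      have ec : (∫ y in Ioo (0:ℝ) (1/2), ρ (x, y)) =
          ∫ y in Ioo (0:ℝ) (1/2), deriv g₀ x * (deriv f₀ y * ρ (g₀ x, f₀ y)) := by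
        apply integral_congr_ae
        filter_upwards [hQa, ae_restrict_mem measurableSet_Ioo] with y hy hymem
        rw [hy.1 hymem.2, mul_assoc]
      rw [ec, integral_const_mul]
      congr 1
      exact (P₀.cov_f fun z => ρ (g₀ x, z)).symm.trans (setIntegral_congr_set Ioo_ae_eq_Icc)
    have e₁ : (∫ y in Ioo (1/2:ℝ) 1, ρ (x, y)) =
        deriv g₁ x * ∫ y in Icc (0:ℝ) 1, ρ (g₁ x, y) := by
      have ec : (∫ y in Ioo (1/2:ℝ) 1, ρ (x, y)) =
          ∫ y in Ioo (1/2:ℝ) 1, deriv g₁ x * (deriv f₁ y * ρ (g₁ x, f₁ y)) := by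
        apply integral_congr_ae
        filter_upwards [hQb, ae_restrict_mem measurableSet_Ioo] with y hy hymem
        rw [hy.2 hymem.1.le, mul_assoc]
      rw [ec, integral_const_mul]
      congr 1
      exact (P₁.cov_f fun z => ρ (g₁ x, z)).symm.trans (setIntegral_congr_set Ioo_ae_eq_Icc)
    calc (∫ y in Icc (0:ℝ) 1, ρ (x, y))
        = (∫ y in Ioo (0:ℝ) (1/2), ρ (x, y)) + ∫ y in Ioo (1/2:ℝ) 1, ρ (x, y) :=
          hsplit _ hIx
      _ = deriv g₀ x * (∫ y in Icc (0:ℝ) 1, ρ (g₀ x, y)) +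
          deriv g₁ x * (∫ y in Icc (0:ℝ) 1, ρ (g₁ x, y)) := by rw [e₀, e₁]
  · -- second marginal
    have hswap := (Measure.measurePreserving_swap
      (μ := volume.restrict (Icc (0:ℝ) 1)) (ν := volume.restrict (Icc (0:ℝ) 1)))
      |>.quasiMeasurePreserving.ae haeprod
    have hy1 : ∀ᵐ y ∂(volume.restrict (Icc (0:ℝ) 1)),
        ∀ᵐ x ∂(volume.restrict (Icc (0:ℝ) 1)),
        (y < 1/2 → ρ (x, y) = deriv g₀ x * deriv f₀ y * ρ (g₀ x, f₀ y)) ∧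
        (1/2 ≤ y → ρ (x, y) = deriv g₁ x * deriv f₁ y * ρ (g₁ x, f₁ y)) :=
      Measure.ae_ae_of_ae_prod hswap
    have hy2 := hint2.prod_left_ae
    apply lift
    have hz₀ := P₀.ae_comp hy1
    have hz₁ := P₁.ae_comp hy1
    have hy2' := lower hy2
    filter_upwards [hz₀, hz₁, hy2', ae_restrict_mem measurableSet_Ioo] with z hG0 hG1 hIz hz
    have hg0z : g₀ z ∈ Ioo (0:ℝ) (1/2) := P₀.g_mem hz
    have hg1z : g₁ z ∈ Ioo (1/2:ℝ) 1 := P₁.g_mem hz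
    have hf0gz : f₀ (g₀ z) = z := hg₀right z (Ioo_subset_Icc_self hz)
    have hf1gz : f₁ (g₁ z) = z := hg₁right z (Ioo_subset_Icc_self hz)
    have eA : deriv g₀ z * (∫ x in Icc (0:ℝ) 1, ρ (x, g₀ z)) =
        ∫ u in Ioo (0:ℝ) (1/2), ρ (u, z) := by
      have e1 : (∫ x in Icc (0:ℝ) 1, ρ (x, g₀ z)) =
          ∫ x in Icc (0:ℝ) 1, deriv f₀ (g₀ z) * (deriv g₀ x * ρ (g₀ x, z)) := by
        apply integral_congr_ae
        filter_upwards [hG0] with x hQx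
        rw [hQx.1 hg0z.2, hf0gz]; ring
      have e2 : (∫ x in Ioo (0:ℝ) 1, deriv g₀ x * ρ (g₀ x, z)) =
          ∫ u in Ioo (0:ℝ) (1/2), ρ (u, z) := (P₀.cov_g fun u => ρ (u, z)).symm
      rw [e1, integral_const_mul, setIntegral_congr_set Ioo_ae_eq_Icc.symm, e2,
        ← mul_assoc, P₀.g_deriv_mul hz, one_mul]
    have eB : deriv g₁ z * (∫ x in Icc (0:ℝ) 1, ρ (x, g₁ z)) =
        ∫ u in Ioo (1/2:ℝ) 1, ρ (u, z) := by
      have e1 : (∫ x in Icc (0:ℝ) 1, ρ (x, g₁ z)) =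
          ∫ x in Icc (0:ℝ) 1, deriv f₁ (g₁ z) * (deriv g₁ x * ρ (g₁ x, z)) := by
        apply integral_congr_ae
        filter_upwards [hG1] with x hQx
        rw [hQx.2 hg1z.1.le, hf1gz]; ring
      have e2 : (∫ x in Ioo (0:ℝ) 1, deriv g₁ x * ρ (g₁ x, z)) =
          ∫ u in Ioo (1/2:ℝ) 1, ρ (u, z) := (P₁.cov_g fun u => ρ (u, z)).symm
      rw [e1, integral_const_mul, setIntegral_congr_set Ioo_ae_eq_Icc.symm, e2,
        ← mul_assoc, P₁.g_deriv_mul hz, one_mul]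
    calc (∫ x in Icc (0:ℝ) 1, ρ (x, z))
        = (∫ x in Ioo (0:ℝ) (1/2), ρ (x, z)) + ∫ x in Ioo (1/2:ℝ) 1, ρ (x, z) :=
          hsplit _ hIz
      _ = deriv g₀ z * (∫ x in Icc (0:ℝ) 1, ρ (x, g₀ z)) +
          deriv g₁ z * (∫ x in Icc (0:ℝ) 1, ρ (x, g₁ z)) := by rw [← eA, ← eB]
end

section
/- Suppose ζ₀ is a nonnegative integrable function on [0,1] with ∫₀¹ ζ₀ = 1 satisfying the one-dimensional Perron–Frobenius equation ζ₀(x) = g₀'(x) ζ₀(g₀(x)) + g₁'(x) ζ₀(g₁(x)) a.e., and suppose every nonnegative integrable solution of this equation with integral 1 equals ζ₀ a.e. Then for every nonnegative integrable ρ on [0,1]² with ∫∫ ρ = 1 that is an invariant density for F, the two marginals of ρ coincide with ζ₀: for a.e. x, ∫₀¹ ρ(x,y) dy = ζ₀(x) and ∫₀¹ ρ(y,x) dy = ζ₀(x). -/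
open Set MeasureTheory

theorem ae_restrict_comp_of_rightInvOn {E : Type*} [NormedAddCommGroup E] [NormedSpace ℝ E]
    [FiniteDimensional ℝ E] [MeasurableSpace E] [BorelSpace E] {μ : Measure E}
    [μ.IsAddHaarMeasure] {f g : E → E} {s t : Set E} {P : E → Prop}
    (hs : MeasurableSet s) (ht : MeasurableSet t) (hf : DifferentiableOn ℝ f s)
    (hg : MapsTo g t s) (hfg : RightInvOn g f t) (hP : ∀ᵐ x ∂μ.restrict s, P x) :
    ∀ᵐ y ∂μ.restrict t, P (g y) := by
  rw [ae_restrict_iff' hs, ae_iff] at hP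
  rw [ae_restrict_iff' ht, ae_iff]
  refine measure_mono_null (fun y hy => ?_)
    (addHaar_image_eq_zero_of_differentiableOn_of_addHaar_eq_zero μ
      (hf.mono fun x hx => (Classical.not_imp.1 hx).1) hP)
  obtain ⟨hyt, hPy⟩ := Classical.not_imp.1 hy
  exact ⟨g y, Classical.not_imp.2 ⟨hg hyt, hPy⟩, hfg hyt⟩

theorem setIntegral_Icc_eq_add_Ioo {E : Type*} [NormedAddCommGroup E] [NormedSpace ℝ E]
    {φ : ℝ → E} {a b c : ℝ} (hab : a ≤ b) (hbc : b ≤ c) (hφ : IntegrableOn φ (Icc a c)) :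
    ∫ x in Icc a c, φ x = (∫ x in Ioo a b, φ x) + ∫ x in Ioo b c, φ x := by
  rw [← Ico_union_Icc_eq_Icc hab hbc] at hφ ⊢
  rw [setIntegral_union (disjoint_left.2 fun x hx hx' => hx.2.not_ge hx'.1) measurableSet_Icc
    (hφ.mono_set subset_union_left) (hφ.mono_set subset_union_right),
    integral_Ico_eq_integral_Ioo, integral_Icc_eq_integral_Ioo]

theorem ae_prod_restrict_of_ae_restrict_prod {α β : Type*} [MeasureSpace α] [MeasureSpace β]
    [SFinite (volume : Measure α)] [SFinite (volume : Measure β)] {s : Set α} {t u : Set β}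
    {P : α × β → Prop} (hs : MeasurableSet s) (hu : MeasurableSet u) (hut : u ⊆ t)
    (h : ∀ᵐ p ∂volume.restrict (s ×ˢ t), p.2 ∈ u → P p) :
    ∀ᵐ p ∂(volume.restrict s).prod (volume.restrict u), P p := by
  rw [Measure.prod_restrict, ← Measure.volume_eq_prod]
  filter_upwards [ae_restrict_of_ae_restrict_of_subset (prod_mono subset_rfl hut) h,
    ae_restrict_mem (hs.prod hu)] with p hp hpu using hp hpu.2

noncomputable def marginalFst (ρ : ℝ × ℝ → ℝ) (x : ℝ) : ℝ := ∫ y in Icc (0:ℝ) 1, ρ (x, y)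

noncomputable def marginalSnd (ρ : ℝ × ℝ → ℝ) (y : ℝ) : ℝ := ∫ x in Icc (0:ℝ) 1, ρ (x, y)

/-- Since `deriv f` is `0` where `f` is not differentiable, `deriv_pos` also makes `f`
differentiable on `[a, b]`; so `f` is an increasing bijection `[a, b] → [0, 1]` with inverse `g`. -/
structure IsInverseBranch (f g : ℝ → ℝ) (a b : ℝ) : Prop where
  deriv_pos : ∀ x ∈ Icc a b, 0 < deriv f x
  apply_left : f a = 0
  apply_right : f b = 1
  mapsTo : MapsTo g (Icc 0 1) (Icc a b)
  rightInvOn : RightInvOn g f (Icc 0 1)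

namespace IsInverseBranch

variable {f g : ℝ → ℝ} {a b : ℝ}

theorem hasDerivAt (B : IsInverseBranch f g a b) {x : ℝ} (hx : x ∈ Icc a b) :
    HasDerivAt f (deriv f x) x :=
  (differentiableAt_of_deriv_ne_zero (B.deriv_pos x hx).ne').hasDerivAt

theorem strictMonoOn (B : IsInverseBranch f g a b) : StrictMonoOn f (Icc a b) :=
  strictMonoOn_of_deriv_pos (convex_Icc a b)
    (fun _ hx => (B.hasDerivAt hx).continuousAt.continuousWithinAt)
    fun x hx => B.deriv_pos x (interior_subset hx)

theorem mapsTo_Ioo (B : IsInverseBranch f g a b) : MapsTo f (Ioo a b) (Ioo 0 1) := fun x hx => by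
  have hab : a ≤ b := hx.1.le.trans hx.2.le
  refine ⟨?_, ?_⟩
  · rw [← B.apply_left]
    exact B.strictMonoOn (left_mem_Icc.2 hab) (Ioo_subset_Icc_self hx) hx.1
  · rw [← B.apply_right]
    exact B.strictMonoOn (Ioo_subset_Icc_self hx) (right_mem_Icc.2 hab) hx.2

theorem mapsTo_inv_Ioo (B : IsInverseBranch f g a b) : MapsTo g (Ioo 0 1) (Ioo a b) :=
    fun y hy => by
  have hfg := B.rightInvOn (Ioo_subset_Icc_self hy)
  obtain ⟨hay, hyb⟩ := B.mapsTo (Ioo_subset_Icc_self hy)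
  refine ⟨hay.lt_of_ne ?_, hyb.lt_of_ne ?_⟩ <;> intro hgy
  · rw [← hgy, B.apply_left] at hfg
    exact hy.1.ne hfg
  · rw [hgy, B.apply_right] at hfg
    exact hy.2.ne' hfg

theorem invOn (B : IsInverseBranch f g a b) : InvOn g f (Ioo a b) (Ioo 0 1) :=
  ⟨fun _ hx => B.strictMonoOn.injOn (B.mapsTo (Ioo_subset_Icc_self (B.mapsTo_Ioo hx)))
    (Ioo_subset_Icc_self hx) (B.rightInvOn (Ioo_subset_Icc_self (B.mapsTo_Ioo hx))),
   fun _ hy => B.rightInvOn (Ioo_subset_Icc_self hy)⟩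

theorem monotoneOn_inv (B : IsInverseBranch f g a b) : MonotoneOn g (Ioo 0 1) :=
  Function.monotoneOn_of_rightInvOn_of_mapsTo
    (B.strictMonoOn.monotoneOn.mono Ioo_subset_Icc_self) B.invOn.2 B.mapsTo_inv_Ioo

theorem hasDerivAt_inv (B : IsInverseBranch f g a b) {y : ℝ} (hy : y ∈ Ioo 0 1) :
    HasDerivAt g (deriv f (g y))⁻¹ y := by
  have hgy := B.mapsTo_inv_Ioo hy
  have hcont : ContinuousAt g y :=
    continuousAt_of_monotoneOn_of_image_mem_nhds B.monotoneOn_inv (isOpen_Ioo.mem_nhds hy)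
      (by rw [(B.invOn.symm.bijOn B.mapsTo_inv_Ioo B.mapsTo_Ioo).image_eq]
          exact isOpen_Ioo.mem_nhds hgy)
  exact (B.hasDerivAt (Ioo_subset_Icc_self hgy)).of_local_left_inverse hcont
    (B.deriv_pos _ (Ioo_subset_Icc_self hgy)).ne'
    (Filter.eventually_of_mem (isOpen_Ioo.mem_nhds hy) B.invOn.2)

theorem deriv_inv_mul_deriv (B : IsInverseBranch f g a b) {y : ℝ} (hy : y ∈ Ioo 0 1) :
    deriv g y * deriv f (g y) = 1 := by
  rw [(B.hasDerivAt_inv hy).deriv]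
  exact inv_mul_cancel₀ (B.deriv_pos _ (Ioo_subset_Icc_self (B.mapsTo_inv_Ioo hy))).ne'

theorem integral_deriv_mul_comp (B : IsInverseBranch f g a b) (ψ : ℝ → ℝ) :
    ∫ x in Ioo a b, deriv f x * ψ (f x) = ∫ u in Icc 0 1, ψ u := by
  rw [integral_Icc_eq_integral_Ioo,
    ← (B.invOn.bijOn B.mapsTo_Ioo B.mapsTo_inv_Ioo).image_eq,
    integral_image_eq_integral_deriv_smul_of_monotoneOn measurableSet_Ioo
      (fun x hx => (B.hasDerivAt (Ioo_subset_Icc_self hx)).hasDerivWithinAt)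
      (B.strictMonoOn.monotoneOn.mono Ioo_subset_Icc_self)]
  rfl

theorem integral_deriv_inv_mul_comp (B : IsInverseBranch f g a b) (ψ : ℝ → ℝ) :
    ∫ y in Icc 0 1, deriv g y * ψ (g y) = ∫ u in Ioo a b, ψ u := by
  rw [integral_Icc_eq_integral_Ioo,
    ← (B.invOn.symm.bijOn B.mapsTo_inv_Ioo B.mapsTo_Ioo).image_eq,
    integral_image_eq_integral_deriv_smul_of_monotoneOn measurableSet_Ioo
      (fun y hy => (B.hasDerivAt_inv hy).differentiableAt.hasDerivAt.hasDerivWithinAt)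
      B.monotoneOn_inv]
  rfl

theorem ae_comp_inv (B : IsInverseBranch f g a b) {P : ℝ → Prop}
    (hP : ∀ᵐ x ∂volume.restrict (Ioo a b), P x) : ∀ᵐ y ∂volume.restrict (Icc 0 1), P (g y) := by
  rw [← Measure.restrict_congr_set Ioo_ae_eq_Icc]
  exact ae_restrict_comp_of_rightInvOn measurableSet_Ioo measurableSet_Ioo
    (fun x hx => (B.hasDerivAt (Ioo_subset_Icc_self hx)).differentiableAt.differentiableWithinAt)
    B.mapsTo_inv_Ioo B.invOn.2 hP

variable {ρ : ℝ × ℝ → ℝ}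

theorem ae_integral_Ioo_eq_deriv_mul_marginalFst (B : IsInverseBranch f g a b)
    (h : ∀ᵐ p ∂(volume.restrict (Icc (0:ℝ) 1)).prod (volume.restrict (Ioo a b)),
      ρ p = deriv g p.1 * deriv f p.2 * ρ (g p.1, f p.2)) :
    ∀ᵐ x ∂volume.restrict (Icc (0:ℝ) 1),
      ∫ y in Ioo a b, ρ (x, y) = deriv g x * marginalFst ρ (g x) := by
  filter_upwards [Measure.ae_ae_of_ae_prod h] with x hx
  rw [integral_congr_ae hx, marginalFst, ← B.integral_deriv_mul_comp, ← integral_const_mul]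
  simp only [mul_assoc]

theorem ae_deriv_mul_marginalSnd_eq (B : IsInverseBranch f g a b)
    (h : ∀ᵐ p ∂(volume.restrict (Icc (0:ℝ) 1)).prod (volume.restrict (Ioo a b)),
      ρ p = deriv g p.1 * deriv f p.2 * ρ (g p.1, f p.2)) :
    ∀ᵐ x ∂volume.restrict (Icc (0:ℝ) 1),
      deriv g x * marginalSnd ρ (g x) = ∫ y in Ioo a b, ρ (y, x) := by
  have hswap : ∀ᵐ t ∂volume.restrict (Ioo a b), ∀ᵐ y ∂volume.restrict (Icc (0:ℝ) 1),
      ρ (y, t) = deriv g y * deriv f t * ρ (g y, f t) :=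
    Measure.ae_ae_of_ae_prod (Measure.measurePreserving_swap.quasiMeasurePreserving.ae h)
  have hY : ∀ᵐ t ∂volume.restrict (Ioo a b),
      marginalSnd ρ t = deriv f t * ∫ y in Ioo a b, ρ (y, f t) := by
    filter_upwards [hswap] with t ht
    rw [marginalSnd, integral_congr_ae ht, ← B.integral_deriv_inv_mul_comp, ← integral_const_mul]
    congr 1 with y
    ring
  have hIoo : ∀ᵐ x ∂volume.restrict (Icc (0:ℝ) 1), x ∈ Ioo 0 1 := by
    rw [← Measure.restrict_congr_set Ioo_ae_eq_Icc]
    exact ae_restrict_mem measurableSet_Ioo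
  filter_upwards [B.ae_comp_inv hY, hIoo] with x hx hxI
  rw [hx, B.invOn.2 hxI, ← mul_assoc, B.deriv_inv_mul_deriv hxI, one_mul]

end IsInverseBranch

namespace IsInvariantDensity

variable {f₀ f₁ g₀ g₁ : ℝ → ℝ} {ρ : ℝ × ℝ → ℝ}

theorem integrable_prod (hρ : IsInvariantDensity f₀ f₁ g₀ g₁ ρ) :
    Integrable ρ ((volume.restrict (Icc (0:ℝ) 1)).prod (volume.restrict (Icc (0:ℝ) 1))) := by
  rw [Measure.prod_restrict, ← Measure.volume_eq_prod]
  exact hρ.2.1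

theorem ae_eq_branch₀ (hρ : IsInvariantDensity f₀ f₁ g₀ g₁ ρ) :
    ∀ᵐ p ∂(volume.restrict (Icc (0:ℝ) 1)).prod (volume.restrict (Ioo 0 (1/2))),
      ρ p = deriv g₀ p.1 * deriv f₀ p.2 * ρ (g₀ p.1, f₀ p.2) :=
  ae_prod_restrict_of_ae_restrict_prod measurableSet_Icc measurableSet_Ioo
    (Ioo_subset_Icc_self.trans (Icc_subset_Icc le_rfl (by norm_num)))
    (hρ.2.2.mono fun _ hp hp₂ => hp.1 hp₂.2)

theorem ae_eq_branch₁ (hρ : IsInvariantDensity f₀ f₁ g₀ g₁ ρ) :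
    ∀ᵐ p ∂(volume.restrict (Icc (0:ℝ) 1)).prod (volume.restrict (Ioo (1/2) 1)),
      ρ p = deriv g₁ p.1 * deriv f₁ p.2 * ρ (g₁ p.1, f₁ p.2) :=
  ae_prod_restrict_of_ae_restrict_prod measurableSet_Icc measurableSet_Ioo
    (Ioo_subset_Icc_self.trans (Icc_subset_Icc (by norm_num) le_rfl))
    (hρ.2.2.mono fun _ hp hp₂ => hp.2 hp₂.1.le)

theorem marginalFst_nonneg (hρ : IsInvariantDensity f₀ f₁ g₀ g₁ ρ) :
    ∀ x ∈ Icc (0:ℝ) 1, 0 ≤ marginalFst ρ x := fun _ hx =>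
  setIntegral_nonneg measurableSet_Icc fun _ hy => hρ.1 _ ⟨hx, hy⟩

theorem marginalSnd_nonneg (hρ : IsInvariantDensity f₀ f₁ g₀ g₁ ρ) :
    ∀ y ∈ Icc (0:ℝ) 1, 0 ≤ marginalSnd ρ y := fun _ hy =>
  setIntegral_nonneg measurableSet_Icc fun _ hx => hρ.1 _ ⟨hx, hy⟩

theorem integrableOn_marginalFst (hρ : IsInvariantDensity f₀ f₁ g₀ g₁ ρ) :
    IntegrableOn (marginalFst ρ) (Icc 0 1) :=
  hρ.integrable_prod.integral_prod_left

theorem integrableOn_marginalSnd (hρ : IsInvariantDensity f₀ f₁ g₀ g₁ ρ) :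
    IntegrableOn (marginalSnd ρ) (Icc 0 1) :=
  hρ.integrable_prod.swap.integral_prod_left

theorem integral_marginalFst (hρ : IsInvariantDensity f₀ f₁ g₀ g₁ ρ) :
    ∫ x in Icc (0:ℝ) 1, marginalFst ρ x = ∫ p in Icc (0:ℝ) 1 ×ˢ Icc (0:ℝ) 1, ρ p :=
  (setIntegral_prod ρ hρ.2.1).symm

theorem integral_marginalSnd (hρ : IsInvariantDensity f₀ f₁ g₀ g₁ ρ) :
    ∫ y in Icc (0:ℝ) 1, marginalSnd ρ y = ∫ p in Icc (0:ℝ) 1 ×ˢ Icc (0:ℝ) 1, ρ p := by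
  rw [Measure.volume_eq_prod, ← setIntegral_prod_swap, setIntegral_prod]
  · rfl
  · rw [IntegrableOn, ← Measure.prod_restrict]
    exact hρ.integrable_prod.swap

theorem ae_marginalFst_eq_perronFrobenius (hρ : IsInvariantDensity f₀ f₁ g₀ g₁ ρ)
    (B₀ : IsInverseBranch f₀ g₀ 0 (1/2)) (B₁ : IsInverseBranch f₁ g₁ (1/2) 1) :
    ∀ᵐ x ∂volume.restrict (Icc (0:ℝ) 1), marginalFst ρ x =
      deriv g₀ x * marginalFst ρ (g₀ x) + deriv g₁ x * marginalFst ρ (g₁ x) := by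
  filter_upwards [hρ.integrable_prod.prod_right_ae,
    B₀.ae_integral_Ioo_eq_deriv_mul_marginalFst hρ.ae_eq_branch₀,
    B₁.ae_integral_Ioo_eq_deriv_mul_marginalFst hρ.ae_eq_branch₁] with x hint h₀ h₁
  rw [marginalFst, setIntegral_Icc_eq_add_Ioo (b := 1/2) (by norm_num) (by norm_num) hint, h₀, h₁]

theorem ae_marginalSnd_eq_perronFrobenius (hρ : IsInvariantDensity f₀ f₁ g₀ g₁ ρ)
    (B₀ : IsInverseBranch f₀ g₀ 0 (1/2)) (B₁ : IsInverseBranch f₁ g₁ (1/2) 1) :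
    ∀ᵐ y ∂volume.restrict (Icc (0:ℝ) 1), marginalSnd ρ y =
      deriv g₀ y * marginalSnd ρ (g₀ y) + deriv g₁ y * marginalSnd ρ (g₁ y) := by
  filter_upwards [hρ.integrable_prod.swap.prod_right_ae,
    B₀.ae_deriv_mul_marginalSnd_eq hρ.ae_eq_branch₀,
    B₁.ae_deriv_mul_marginalSnd_eq hρ.ae_eq_branch₁] with y hint h₀ h₁
  rw [marginalSnd, h₀, h₁]
  exact setIntegral_Icc_eq_add_Ioo (φ := fun x => ρ (x, y)) (by norm_num) (by norm_num) hint

end IsInvariantDensity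

theorem invariant_density_marginals_eq_unique_PF_solution_general
    (α : ℝ) (hα : 1 < α)
    (f₀ f₁ g₀ g₁ : ℝ → ℝ)
    (hf₀0 : f₀ 0 = 0) (hf₀half : f₀ (1/2) = 1)
    (hf₀deriv : ∀ x ∈ Icc (0:ℝ) (1/2), α ≤ deriv f₀ x)
    (hf₁ : ∀ x, f₁ x = 1 - f₀ (1 - x))
    (hg₀maps : MapsTo g₀ (Icc 0 1) (Icc 0 (1/2)))
    (hg₁maps : MapsTo g₁ (Icc 0 1) (Icc (1/2) 1))
    (hg₀right : ∀ y ∈ Icc (0:ℝ) 1, f₀ (g₀ y) = y)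
    (hg₁right : ∀ y ∈ Icc (0:ℝ) 1, f₁ (g₁ y) = y)
    (ζ₀ : ℝ → ℝ)
    (hζ₀uniq : ∀ ζ : ℝ → ℝ, (∀ x ∈ Icc (0:ℝ) 1, 0 ≤ ζ x) →
      IntegrableOn ζ (Icc 0 1) → (∫ x in Icc (0:ℝ) 1, ζ x) = 1 →
      (∀ᵐ x ∂(volume.restrict (Icc (0:ℝ) 1)),
        ζ x = deriv g₀ x * ζ (g₀ x) + deriv g₁ x * ζ (g₁ x)) →
      (∀ᵐ x ∂(volume.restrict (Icc (0:ℝ) 1)), ζ x = ζ₀ x)) :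
    ∀ ρ : ℝ × ℝ → ℝ, IsInvariantDensity f₀ f₁ g₀ g₁ ρ →
      (∫ p in Icc (0:ℝ) 1 ×ˢ Icc (0:ℝ) 1, ρ p) = 1 →
      ∀ᵐ x ∂(volume.restrict (Icc (0:ℝ) 1)),
        (∫ y in Icc (0:ℝ) 1, ρ (x, y)) = ζ₀ x ∧
        (∫ y in Icc (0:ℝ) 1, ρ (y, x)) = ζ₀ x := by
  intro ρ hρ hnorm
  have hpos₀ : ∀ x ∈ Icc (0:ℝ) (1/2), 0 < deriv f₀ x := fun x hx =>
    (zero_lt_one.trans hα).trans_le (hf₀deriv x hx)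
  have hderiv₁ : ∀ x, deriv f₁ x = deriv f₀ (1 - x) := fun x => by
    rw [show f₁ = fun x => 1 - f₀ (1 - x) from funext hf₁, deriv_const_sub,
      deriv_comp_const_sub, neg_neg]
  have B₀ : IsInverseBranch f₀ g₀ 0 (1/2) :=
    ⟨hpos₀, hf₀0, hf₀half, hg₀maps, hg₀right⟩
  have B₁ : IsInverseBranch f₁ g₁ (1/2) 1 :=
    ⟨fun x hx => hderiv₁ x ▸ hpos₀ (1 - x) ⟨by linarith [hx.2], by linarith [hx.1]⟩,
      by norm_num [hf₁, hf₀half], by norm_num [hf₁, hf₀0], hg₁maps, hg₁right⟩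
  have hfst := hζ₀uniq _ hρ.marginalFst_nonneg hρ.integrableOn_marginalFst
    (hρ.integral_marginalFst.trans hnorm) (hρ.ae_marginalFst_eq_perronFrobenius B₀ B₁)
  have hsnd := hζ₀uniq _ hρ.marginalSnd_nonneg hρ.integrableOn_marginalSnd
    (hρ.integral_marginalSnd.trans hnorm) (hρ.ae_marginalSnd_eq_perronFrobenius B₀ B₁)
  filter_upwards [hfst, hsnd] with x h₁ h₂ using ⟨h₁, h₂⟩

/-- If `ζ₀` is the (essentially unique) normalized nonnegative
solution of the one-dimensional Perron–Frobenius equation, then both marginals of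
any normalized invariant density `ρ` of `F` coincide a.e. with `ζ₀`. -/
theorem invariant_density_marginals_eq_unique_PF_solution
    (α : ℝ) (hα : 1 < α)
    (f₀ f₁ g₀ g₁ : ℝ → ℝ)
    (hf₀C : ContDiffOn ℝ 2 f₀ (Icc 0 (1/2)))
    (hf₀0 : f₀ 0 = 0) (hf₀half : f₀ (1/2) = 1)
    (hf₀deriv : ∀ x ∈ Icc (0:ℝ) (1/2), α ≤ deriv f₀ x)
    (hf₀maps : MapsTo f₀ (Icc 0 (1/2)) (Icc 0 1))
    (hf₁ : ∀ x, f₁ x = 1 - f₀ (1 - x))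
    (hg₀maps : MapsTo g₀ (Icc 0 1) (Icc 0 (1/2)))
    (hg₁maps : MapsTo g₁ (Icc 0 1) (Icc (1/2) 1))
    (hg₀left : ∀ x ∈ Icc (0:ℝ) (1/2), g₀ (f₀ x) = x)
    (hg₀right : ∀ y ∈ Icc (0:ℝ) 1, f₀ (g₀ y) = y)
    (hg₁left : ∀ x ∈ Icc (1/2:ℝ) 1, g₁ (f₁ x) = x)
    (hg₁right : ∀ y ∈ Icc (0:ℝ) 1, f₁ (g₁ y) = y)
    (ζ₀ : ℝ → ℝ)
    (hζ₀pos : ∀ x ∈ Icc (0:ℝ) 1, 0 ≤ ζ₀ x)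
    (hζ₀int : IntegrableOn ζ₀ (Icc 0 1))
    (hζ₀norm : (∫ x in Icc (0:ℝ) 1, ζ₀ x) = 1)
    (hζ₀PF : ∀ᵐ x ∂(volume.restrict (Icc (0:ℝ) 1)),
      ζ₀ x = deriv g₀ x * ζ₀ (g₀ x) + deriv g₁ x * ζ₀ (g₁ x))
    (hζ₀uniq : ∀ ζ : ℝ → ℝ, (∀ x ∈ Icc (0:ℝ) 1, 0 ≤ ζ x) →
      IntegrableOn ζ (Icc 0 1) → (∫ x in Icc (0:ℝ) 1, ζ x) = 1 →
      (∀ᵐ x ∂(volume.restrict (Icc (0:ℝ) 1)),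
        ζ x = deriv g₀ x * ζ (g₀ x) + deriv g₁ x * ζ (g₁ x)) →
      (∀ᵐ x ∂(volume.restrict (Icc (0:ℝ) 1)), ζ x = ζ₀ x)) :
    ∀ ρ : ℝ × ℝ → ℝ, IsInvariantDensity f₀ f₁ g₀ g₁ ρ →
      (∫ p in Icc (0:ℝ) 1 ×ˢ Icc (0:ℝ) 1, ρ p) = 1 →
      ∀ᵐ x ∂(volume.restrict (Icc (0:ℝ) 1)),
        (∫ y in Icc (0:ℝ) 1, ρ (x, y)) = ζ₀ x ∧
        (∫ y in Icc (0:ℝ) 1, ρ (y, x)) = ζ₀ x :=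
  invariant_density_marginals_eq_unique_PF_solution_general α hα f₀ f₁ g₀ g₁ hf₀0 hf₀half hf₀deriv
    hf₁ hg₀maps hg₁maps hg₀right hg₁right ζ₀ hζ₀uniq
end

section
/- For any nonnegative integrable ρ on [0,1]² with ∫∫ ρ = 1 that is an invariant density for F, the sum of the Lyapunov exponents of F vanishes: setting η(y) := ∫₀¹ ρ(x,y) dx, one has ∫₀^{1/2}∫₀¹ ρ(x,y) log g₀'(y) dy dx + ∫_{1/2}¹∫₀¹ ρ(x,y) log g₁'(y) dy dx = −[∫₀^{1/2} η(x) log f₀'(x) dx + ∫_{1/2}¹ η(x) log f₁'(x) dx], i.e. λ₋ = −λ₊. -/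
open Set MeasureTheory

private lemma branch_identity
    (α a b : ℝ) (hα : 1 < α) (hab : a < b)
    (hsub : Icc a b ⊆ Icc (0:ℝ) 1)
    (f g : ℝ → ℝ)
    (hcont : ContinuousOn f (Icc a b))
    (hd : ∀ x ∈ Ioo a b, HasDerivAt f (deriv f x) x)
    (hlb : ∀ x ∈ Ioo a b, α ≤ deriv f x)
    (M : ℝ) (hub : ∀ x ∈ Ioo a b, deriv f x ≤ M)
    (hfa : f a = 0) (hfb : f b = 1)
    (hgmaps : MapsTo g (Icc 0 1) (Icc a b))
    (hgl : ∀ x ∈ Icc a b, g (f x) = x)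
    (hgr : ∀ y ∈ Icc (0:ℝ) 1, f (g y) = y)
    (ρ : ℝ × ℝ → ℝ)
    (hρint : IntegrableOn ρ (Icc 0 1 ×ˢ Icc 0 1))
    (hinv : ∀ᵐ y ∂(volume.restrict (Ioo a b)), ∀ᵐ x ∂(volume.restrict (Icc (0:ℝ) 1)),
      ρ (x, y) = deriv g x * deriv f y * ρ (g x, f y))
    (η : ℝ → ℝ)
    (hη : ∀ y, η y = ∫ x in Icc (0:ℝ) 1, ρ (x, y)) :
    (∫ x in Icc a b, ∫ y in Icc (0:ℝ) 1, ρ (x, y) * Real.log (deriv g y))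
      = -∫ x in Icc a b, η x * Real.log (deriv f x) := by
  have hd0 : ∀ x ∈ Ioo a b, 0 < deriv f x := fun x hx => lt_of_lt_of_le (by linarith) (hlb x hx)
  have sm : StrictMonoOn f (Icc a b) :=
    strictMonoOn_of_deriv_pos (convex_Icc a b) hcont (by rw [interior_Icc]; exact hd0)
  have himg : f '' Icc a b = Icc 0 1 := by
    apply Subset.antisymm
    · rintro _ ⟨x, hx, rfl⟩
      refine ⟨?_, ?_⟩
      · rw [← hfa]; exact sm.monotoneOn (left_mem_Icc.2 hab.le) hx hx.1
      · rw [← hfb]; exact sm.monotoneOn hx (right_mem_Icc.2 hab.le) hx.2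
    · have h := intermediate_value_Icc hab.le hcont
      rw [hfa, hfb] at h; exact h
  have himgIoo : f '' Ioo a b = Ioo 0 1 := by
    apply Subset.antisymm
    · rintro _ ⟨x, hx, rfl⟩
      refine ⟨?_, ?_⟩
      · rw [← hfa]; exact sm (left_mem_Icc.2 hab.le) (Ioo_subset_Icc_self hx) hx.1
      · rw [← hfb]; exact sm (Ioo_subset_Icc_self hx) (right_mem_Icc.2 hab.le) hx.2
    · intro y hy
      have : y ∈ f '' Icc a b := by rw [himg]; exact Ioo_subset_Icc_self hy
      obtain ⟨x, hx, hfx⟩ := this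
      refine ⟨x, ⟨?_, ?_⟩, hfx⟩
      · rcases eq_or_lt_of_le hx.1 with h | h
        · exfalso; rw [← h, hfa] at hfx; exact absurd (hfx ▸ hy.1) (lt_irrefl _)
        · exact h
      · rcases eq_or_lt_of_le hx.2 with h | h
        · exfalso; rw [h, hfb] at hfx; exact absurd (hfx ▸ hy.2) (lt_irrefl _)
        · exact h
  have hgIoo : ∀ y ∈ Ioo (0:ℝ) 1, g y ∈ Ioo a b := by
    intro y hy
    have hyI : y ∈ Icc (0:ℝ) 1 := Ioo_subset_Icc_self hy
    have hg1 : g y ∈ Icc a b := hgmaps hyI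
    have hfg : f (g y) = y := hgr y hyI
    refine ⟨?_, ?_⟩
    · rcases eq_or_lt_of_le hg1.1 with h | h
      · exfalso; rw [← h, hfa] at hfg; exact absurd (hfg ▸ hy.1) (lt_irrefl _)
      · exact h
    · rcases eq_or_lt_of_le hg1.2 with h | h
      · exfalso; rw [h, hfb] at hfg; exact absurd (hfg ▸ hy.2) (lt_irrefl _)
      · exact h
  -- continuity of g on the open interval
  have hgcont : ∀ y₀ ∈ Ioo (0:ℝ) 1, ContinuousAt g y₀ := by
    intro y₀ hy₀
    have hx₀ : g y₀ ∈ Ioo a b := hgIoo y₀ hy₀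
    have hfx₀ : f (g y₀) = y₀ := hgr y₀ (Ioo_subset_Icc_self hy₀)
    rw [Metric.continuousAt_iff]
    intro ε hε
    set x₀ := g y₀ with hx₀def
    set ε' := min (ε/2) (min ((x₀ - a)/2) ((b - x₀)/2)) with hε'def
    have hε'pos : 0 < ε' := by
      apply lt_min (by linarith)
      exact lt_min (by have := hx₀.1; linarith) (by have := hx₀.2; linarith)
    have hε'1 : ε' ≤ (x₀ - a)/2 := le_trans (min_le_right _ _) (min_le_left _ _)
    have hε'2 : ε' ≤ (b - x₀)/2 := le_trans (min_le_right _ _) (min_le_right _ _)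
    have hxl : x₀ - ε' ∈ Icc a b := ⟨by have := hx₀.1; linarith, by have := hx₀.2; linarith⟩
    have hxr : x₀ + ε' ∈ Icc a b := ⟨by have := hx₀.1; linarith, by have := hx₀.2; linarith⟩
    have hx₀I : x₀ ∈ Icc a b := Ioo_subset_Icc_self hx₀
    have h1 : f (x₀ - ε') < y₀ := by
      rw [← hfx₀]; exact sm hxl hx₀I (by linarith)
    have h2 : y₀ < f (x₀ + ε') := by
      rw [← hfx₀]; exact sm hx₀I hxr (by linarith)
    refine ⟨min (f (x₀ + ε') - y₀) (y₀ - f (x₀ - ε')), lt_min (by linarith) (by linarith), ?_⟩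
    intro y hy
    rw [Real.dist_eq] at hy ⊢
    have habs := abs_lt.mp hy
    have hy1 : f (x₀ - ε') < y := by
      have := habs.1
      have h3 : min (f (x₀ + ε') - y₀) (y₀ - f (x₀ - ε')) ≤ y₀ - f (x₀ - ε') := min_le_right _ _
      linarith
    have hy2 : y < f (x₀ + ε') := by
      have := habs.2
      have h3 : min (f (x₀ + ε') - y₀) (y₀ - f (x₀ - ε')) ≤ f (x₀ + ε') - y₀ := min_le_left _ _
      linarith
    have hyI : y ∈ Icc (0:ℝ) 1 := by
      constructor
      · have : f a ≤ f (x₀ - ε') := sm.monotoneOn (left_mem_Icc.2 hab.le) hxl hxl.1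
        rw [hfa] at this; linarith
      · have : f (x₀ + ε') ≤ f b := sm.monotoneOn hxr (right_mem_Icc.2 hab.le) hxr.2
        rw [hfb] at this; linarith
    have hgy : g y ∈ Icc a b := hgmaps hyI
    have hfyg : f (g y) = y := hgr y hyI
    have l1 : x₀ - ε' < g y := (sm.lt_iff_lt hxl hgy).mp (by rw [hfyg]; exact hy1)
    have l2 : g y < x₀ + ε' := (sm.lt_iff_lt hgy hxr).mp (by rw [hfyg]; exact hy2)
    have : |g y - x₀| < ε' := abs_lt.mpr ⟨by linarith, by linarith⟩
    calc |g y - g y₀| = |g y - x₀| := rfl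
      _ < ε' := this
      _ ≤ ε/2 := min_le_left _ _
      _ < ε := by linarith
  have hgd : ∀ y ∈ Ioo (0:ℝ) 1, HasDerivAt g ((deriv f (g y))⁻¹) y := by
    intro y hy
    have hgy := hgIoo y hy
    refine HasDerivAt.of_local_left_inverse (hgcont y hy) (hd _ hgy) (ne_of_gt (hd0 _ hgy)) ?_
    filter_upwards [isOpen_Ioo.mem_nhds hy] with z hz using hgr z (Ioo_subset_Icc_self hz)
  have hgderiv : ∀ y ∈ Ioo (0:ℝ) 1, deriv g y = (deriv f (g y))⁻¹ := fun y hy => (hgd y hy).deriv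
  -- bound on the logarithm
  have hmid : (a + b)/2 ∈ Ioo a b := ⟨by linarith, by linarith⟩
  have hαM : α ≤ M := le_trans (hlb _ hmid) (hub _ hmid)
  have hM1 : 1 < M := lt_of_lt_of_le hα hαM
  have hlogbound : ∀ y ∈ Ioo (0:ℝ) 1, |Real.log (deriv g y)| ≤ Real.log M := by
    intro y hy
    have hgy := hgIoo y hy
    rw [hgderiv y hy, Real.log_inv, abs_neg,
      abs_of_nonneg (Real.log_nonneg (by linarith [hlb _ hgy]))]
    exact Real.log_le_log (hd0 _ hgy) (hub _ hgy)
  -- integrability of the double integrand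
  have hρrect : IntegrableOn ρ (Icc a b ×ˢ Icc (0:ℝ) 1) :=
    hρint.mono_set (prod_mono_left hsub)
  have hrew : (volume.restrict (Icc a b)).prod (volume.restrict (Icc (0:ℝ) 1))
      = volume.restrict (Icc a b ×ˢ Icc (0:ℝ) 1) := by
    rw [Measure.prod_restrict, ← Measure.volume_eq_prod]
  have haesnd : ∀ᵐ p ∂(volume.restrict (Icc a b ×ˢ Icc (0:ℝ) 1)), p.2 ∈ Ioo (0:ℝ) 1 := by
    have hnull : (volume : Measure (ℝ × ℝ)) {p : ℝ × ℝ | p.2 = 0 ∨ p.2 = 1} = 0 := by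
      have hset : {p : ℝ × ℝ | p.2 = 0 ∨ p.2 = 1} = (univ : Set ℝ) ×ˢ ({0, 1} : Set ℝ) := by
        ext p; simp [Set.mem_prod]
      rw [hset, Measure.volume_eq_prod, Measure.prod_prod,
        show (volume ({0, 1} : Set ℝ)) = 0 from
          ((Set.finite_singleton (1:ℝ)).insert 0).measure_zero _, mul_zero]
    have h1 : ∀ᵐ p ∂(volume.restrict (Icc a b ×ˢ Icc (0:ℝ) 1)), ¬(p.2 = 0 ∨ p.2 = 1) :=
      ae_restrict_of_ae (by rw [ae_iff]; simp only [not_not]; exact hnull)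
    filter_upwards [h1, ae_restrict_mem (measurableSet_Icc.prod measurableSet_Icc)] with p hp hpm
    have h2 : p.2 ∈ Icc (0:ℝ) 1 := hpm.2
    push_neg at hp
    exact ⟨lt_of_le_of_ne h2.1 (Ne.symm hp.1), lt_of_le_of_ne h2.2 hp.2⟩
  have hFint : Integrable (fun p : ℝ × ℝ => ρ p * Real.log (deriv g p.2))
      ((volume.restrict (Icc a b)).prod (volume.restrict (Icc (0:ℝ) 1))) := by
    rw [hrew]
    have hmg : AEStronglyMeasurable (fun p : ℝ × ℝ => Real.log (deriv g p.2))
        (volume.restrict (Icc a b ×ˢ Icc (0:ℝ) 1)) :=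
      (Real.measurable_log.comp ((measurable_deriv g).comp measurable_snd)).aestronglyMeasurable
    refine Integrable.mono' (hρrect.norm.const_mul (Real.log M))
      (hρrect.aestronglyMeasurable.mul hmg) ?_
    filter_upwards [haesnd] with p hp
    rw [norm_mul]
    calc ‖ρ p‖ * ‖Real.log (deriv g p.2)‖ ≤ ‖ρ p‖ * Real.log M := by
          exact mul_le_mul_of_nonneg_left (hlogbound p.2 hp) (norm_nonneg _)
      _ = Real.log M * ‖ρ p‖ := mul_comm _ _
  -- main computation
  set K : ℝ → ℝ := fun y => ∫ x in Icc a b, ρ (x, y) with hKdef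
  have hCoV : ∀ (h : ℝ → ℝ), (∫ y in Ioo (0:ℝ) 1, h y)
      = ∫ u in Ioo a b, |deriv f u| • h (f u) := by
    intro h
    rw [← himgIoo]
    exact integral_image_eq_integral_abs_deriv_smul measurableSet_Ioo
      (fun u hu => (hd u hu).hasDerivWithinAt) (sm.injOn.mono Ioo_subset_Icc_self) h
  have hLHS : (∫ x in Icc a b, ∫ y in Icc (0:ℝ) 1, ρ (x, y) * Real.log (deriv g y))
      = -∫ u in Ioo a b, deriv f u * K (f u) * Real.log (deriv f u) := by
    calc (∫ x in Icc a b, ∫ y in Icc (0:ℝ) 1, ρ (x, y) * Real.log (deriv g y))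
        = ∫ y in Icc (0:ℝ) 1, ∫ x in Icc a b, ρ (x, y) * Real.log (deriv g y) :=
          integral_integral_swap hFint
      _ = ∫ y in Icc (0:ℝ) 1, K y * Real.log (deriv g y) := by
          refine integral_congr_ae (Filter.Eventually.of_forall fun y => ?_)
          exact integral_mul_const _ _
      _ = ∫ y in Ioo (0:ℝ) 1, K y * Real.log (deriv g y) := integral_Icc_eq_integral_Ioo
      _ = ∫ u in Ioo a b, |deriv f u| • (K (f u) * Real.log (deriv g (f u))) :=
          hCoV (fun y => K y * Real.log (deriv g y))
      _ = ∫ u in Ioo a b, -(deriv f u * K (f u) * Real.log (deriv f u)) := by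
          refine setIntegral_congr_fun measurableSet_Ioo fun u hu => ?_
          have h1 : g (f u) = u := hgl u (Ioo_subset_Icc_self hu)
          have hfu : f u ∈ Ioo (0:ℝ) 1 := by rw [← himgIoo]; exact mem_image_of_mem f hu
          have h2 : deriv g (f u) = (deriv f u)⁻¹ := by
            rw [hgderiv (f u) hfu, h1]
          rw [smul_eq_mul, h2, Real.log_inv, abs_of_pos (hd0 u hu)]; ring
      _ = -∫ u in Ioo a b, deriv f u * K (f u) * Real.log (deriv f u) := integral_neg _
  have hkey : ∀ᵐ y ∂(volume.restrict (Ioo a b)),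
      η y * Real.log (deriv f y) = deriv f y * K (f y) * Real.log (deriv f y) := by
    filter_upwards [hinv, ae_restrict_mem measurableSet_Ioo] with y hy hymem
    have e1 : η y = ∫ x in Icc (0:ℝ) 1, deriv g x * deriv f y * ρ (g x, f y) := by
      rw [hη]; exact integral_congr_ae hy
    have e2 : (∫ x in Icc (0:ℝ) 1, deriv g x * deriv f y * ρ (g x, f y))
        = deriv f y * ∫ x in Icc (0:ℝ) 1, deriv g x * ρ (g x, f y) := by
      rw [← integral_const_mul]
      refine integral_congr_ae (Filter.Eventually.of_forall fun x => ?_)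
      ring
    have e3 : (∫ x in Icc (0:ℝ) 1, deriv g x * ρ (g x, f y))
        = ∫ u in Ioo a b, ρ (u, f y) := by
      rw [integral_Icc_eq_integral_Ioo, hCoV (fun x => deriv g x * ρ (g x, f y))]
      refine setIntegral_congr_fun measurableSet_Ioo fun u hu => ?_
      have h1 : g (f u) = u := hgl u (Ioo_subset_Icc_self hu)
      have hfu : f u ∈ Ioo (0:ℝ) 1 := by rw [← himgIoo]; exact mem_image_of_mem f hu
      have h2 : deriv g (f u) = (deriv f u)⁻¹ := by rw [hgderiv (f u) hfu, h1]
      rw [smul_eq_mul, h2, h1, abs_of_pos (hd0 u hu)]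
      exact mul_inv_cancel_left₀ (ne_of_gt (hd0 u hu)) _
    have e4 : K (f y) = ∫ u in Ioo a b, ρ (u, f y) := integral_Icc_eq_integral_Ioo
    rw [e1, e2, e3, ← e4]
  have hRHS : (∫ x in Icc a b, η x * Real.log (deriv f x))
      = ∫ u in Ioo a b, deriv f u * K (f u) * Real.log (deriv f u) := by
    rw [integral_Icc_eq_integral_Ioo]
    exact integral_congr_ae hkey
  rw [hLHS, hRHS]

/-- The sum of the Lyapunov exponents of `F` vanishes:
`λ₋ = -λ₊`, where `λ₋` is the integral of `log g_ω'` along the contracting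
direction against the invariant density `ρ`, and `λ₊` is the integral of
`log f_ω'` against the marginal `η` of `ρ`. -/
theorem lyapunov_exponents_sum_zero
    (α : ℝ) (hα : 1 < α)
    (f₀ f₁ g₀ g₁ : ℝ → ℝ)
    (hf₀C : ContDiffOn ℝ 2 f₀ (Icc 0 (1/2)))
    (hf₀0 : f₀ 0 = 0) (hf₀half : f₀ (1/2) = 1)
    (hf₀deriv : ∀ x ∈ Icc (0:ℝ) (1/2), α ≤ deriv f₀ x)
    (hf₀maps : MapsTo f₀ (Icc 0 (1/2)) (Icc 0 1))
    (hf₁ : ∀ x, f₁ x = 1 - f₀ (1 - x))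
    (hg₀maps : MapsTo g₀ (Icc 0 1) (Icc 0 (1/2)))
    (hg₁maps : MapsTo g₁ (Icc 0 1) (Icc (1/2) 1))
    (hg₀left : ∀ x ∈ Icc (0:ℝ) (1/2), g₀ (f₀ x) = x)
    (hg₀right : ∀ y ∈ Icc (0:ℝ) 1, f₀ (g₀ y) = y)
    (hg₁left : ∀ x ∈ Icc (1/2:ℝ) 1, g₁ (f₁ x) = x)
    (hg₁right : ∀ y ∈ Icc (0:ℝ) 1, f₁ (g₁ y) = y)
    (ρ : ℝ × ℝ → ℝ)
    (hρ : IsInvariantDensity f₀ f₁ g₀ g₁ ρ)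
    (hρnorm : (∫ p in Icc (0:ℝ) 1 ×ˢ Icc (0:ℝ) 1, ρ p) = 1)
    (η : ℝ → ℝ)
    (hη : ∀ y, η y = ∫ x in Icc (0:ℝ) 1, ρ (x, y)) :
    (∫ x in Icc (0:ℝ) (1/2), ∫ y in Icc (0:ℝ) 1, ρ (x, y) * Real.log (deriv g₀ y)) +
        (∫ x in Icc (1/2:ℝ) 1, ∫ y in Icc (0:ℝ) 1, ρ (x, y) * Real.log (deriv g₁ y)) =
      -((∫ x in Icc (0:ℝ) (1/2), η x * Real.log (deriv f₀ x)) +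
          (∫ x in Icc (1/2:ℝ) 1, η x * Real.log (deriv f₁ x))) := by
  obtain ⟨hρpos, hρint, hρae⟩ := hρ
  -- rewrite the restricted measure on the square as a product measure
  have hrewS : volume.restrict (Icc (0:ℝ) 1 ×ˢ Icc (0:ℝ) 1)
      = (volume.restrict (Icc (0:ℝ) 1)).prod (volume.restrict (Icc (0:ℝ) 1)) := by
    rw [Measure.prod_restrict, ← Measure.volume_eq_prod]
  rw [hrewS] at hρae
  -- swap the coordinates in the a.e. statement
  set P : ℝ × ℝ → Prop := fun p =>
    (p.2 < 1/2 → ρ p = deriv g₀ p.1 * deriv f₀ p.2 * ρ (g₀ p.1, f₀ p.2)) ∧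
    (1/2 ≤ p.2 → ρ p = deriv g₁ p.1 * deriv f₁ p.2 * ρ (g₁ p.1, f₁ p.2)) with hPdef
  have hswapped : ∀ᵐ q ∂((volume.restrict (Icc (0:ℝ) 1)).prod (volume.restrict (Icc (0:ℝ) 1))),
      P q.swap := by
    have h0 : ((volume.restrict (Icc (0:ℝ) 1)).prod (volume.restrict (Icc (0:ℝ) 1)))
        {p | ¬ P p} = 0 := ae_iff.mp hρae
    have h1 := (Measure.measurePreserving_swap
      (μ := volume.restrict (Icc (0:ℝ) 1)) (ν := volume.restrict (Icc (0:ℝ) 1))).quasiMeasurePreserving.preimage_null h0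
    exact ae_iff.mpr h1
  have hslices : ∀ᵐ y ∂(volume.restrict (Icc (0:ℝ) 1)),
      ∀ᵐ x ∂(volume.restrict (Icc (0:ℝ) 1)), P (x, y) := Measure.ae_ae_of_ae_prod hswapped
  -- branch 0 invariance
  have hinv₀ : ∀ᵐ y ∂(volume.restrict (Ioo (0:ℝ) (1/2))),
      ∀ᵐ x ∂(volume.restrict (Icc (0:ℝ) 1)),
      ρ (x, y) = deriv g₀ x * deriv f₀ y * ρ (g₀ x, f₀ y) := by
    have hss : Ioo (0:ℝ) (1/2) ⊆ Icc (0:ℝ) 1 :=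
      fun x hx => ⟨hx.1.le, by have := hx.2; linarith⟩
    have h := ae_restrict_of_ae_restrict_of_subset hss hslices
    filter_upwards [h, ae_restrict_mem measurableSet_Ioo] with y hy hymem
    filter_upwards [hy] with x hx
    exact hx.1 hymem.2
  -- branch 1 invariance
  have hinv₁ : ∀ᵐ y ∂(volume.restrict (Ioo (1/2:ℝ) 1)),
      ∀ᵐ x ∂(volume.restrict (Icc (0:ℝ) 1)),
      ρ (x, y) = deriv g₁ x * deriv f₁ y * ρ (g₁ x, f₁ y) := by
    have hss : Ioo (1/2:ℝ) 1 ⊆ Icc (0:ℝ) 1 :=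
      fun x hx => ⟨by have := hx.1; linarith, hx.2.le⟩
    have h := ae_restrict_of_ae_restrict_of_subset hss hslices
    filter_upwards [h, ae_restrict_mem measurableSet_Ioo] with y hy hymem
    filter_upwards [hy] with x hx
    exact hx.2 hymem.1.le
  -- analytic facts about f₀
  have hcont₀ : ContinuousOn f₀ (Icc 0 (1/2)) := hf₀C.continuousOn
  have hd₀ : ∀ x ∈ Ioo (0:ℝ) (1/2), HasDerivAt f₀ (deriv f₀ x) x := by
    intro x hx
    have h1 : DifferentiableWithinAt ℝ f₀ (Icc 0 (1/2)) x :=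
      (hf₀C.differentiableOn (by norm_num)) x (Ioo_subset_Icc_self hx)
    exact (h1.differentiableAt (Icc_mem_nhds hx.1 hx.2)).hasDerivAt
  have hlb₀ : ∀ x ∈ Ioo (0:ℝ) (1/2), α ≤ deriv f₀ x :=
    fun x hx => hf₀deriv x (Ioo_subset_Icc_self hx)
  obtain ⟨z, hz, hzmax⟩ := isCompact_Icc.exists_isMaxOn (nonempty_Icc.mpr (by norm_num))
    (hf₀C.continuousOn_derivWithin (uniqueDiffOn_Icc (by norm_num)) (by norm_num))
  set M := derivWithin f₀ (Icc (0:ℝ) (1/2)) z with hMdef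
  have hub₀ : ∀ x ∈ Ioo (0:ℝ) (1/2), deriv f₀ x ≤ M := by
    intro x hx
    rw [← derivWithin_of_mem_nhds (Icc_mem_nhds hx.1 hx.2)]
    exact hzmax (Ioo_subset_Icc_self hx)
  -- analytic facts about f₁
  have hf₁fun : f₁ = fun y => 1 - f₀ (1 - y) := funext hf₁
  have hder₁ : ∀ x ∈ Ioo (1/2:ℝ) 1, HasDerivAt f₁ (deriv f₀ (1 - x)) x := by
    intro x hx
    have h1x : (1:ℝ) - x ∈ Ioo (0:ℝ) (1/2) := ⟨by have := hx.2; linarith, by have := hx.1; linarith⟩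
    have h0 := hd₀ _ h1x
    have hi : HasDerivAt (fun y : ℝ => 1 - y) (-1) x := by
      simpa using (hasDerivAt_id x).const_sub 1
    have hc := HasDerivAt.comp x h0 hi
    have hfin : HasDerivAt (fun y : ℝ => 1 - f₀ (1 - y)) (-(deriv f₀ (1 - x) * -1)) x :=
      hc.const_sub 1
    rw [hf₁fun]
    simpa using hfin
  have hd₁ : ∀ x ∈ Ioo (1/2:ℝ) 1, HasDerivAt f₁ (deriv f₁ x) x := by
    intro x hx
    have h := hder₁ x hx
    rw [h.deriv]; exact h
  have hderiv₁eq : ∀ x ∈ Ioo (1/2:ℝ) 1, deriv f₁ x = deriv f₀ (1 - x) :=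
    fun x hx => (hder₁ x hx).deriv
  have hlb₁ : ∀ x ∈ Ioo (1/2:ℝ) 1, α ≤ deriv f₁ x := by
    intro x hx
    rw [hderiv₁eq x hx]
    exact hf₀deriv _ ⟨by have := hx.2; linarith, by have := hx.1; linarith⟩
  have hub₁ : ∀ x ∈ Ioo (1/2:ℝ) 1, deriv f₁ x ≤ M := by
    intro x hx
    rw [hderiv₁eq x hx]
    exact hub₀ _ ⟨by have := hx.2; linarith, by have := hx.1; linarith⟩
  have hcont₁ : ContinuousOn f₁ (Icc (1/2) 1) := by
    rw [hf₁fun]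
    refine continuousOn_const.sub (hcont₀.comp ((continuous_const.sub continuous_id).continuousOn) ?_)
    intro x hx
    exact ⟨by have := hx.2; simp; linarith, by have := hx.1; simp; linarith⟩
  have hfa₁ : f₁ (1/2) = 0 := by rw [hf₁]; norm_num [hf₀half]
  have hfb₁ : f₁ 1 = 1 := by rw [hf₁]; norm_num [hf₀0]
  -- apply the branch identity twice
  have hA₀ := branch_identity α 0 (1/2) hα (by norm_num)
    (Icc_subset_Icc le_rfl (by norm_num)) f₀ g₀ hcont₀ hd₀ hlb₀ M hub₀ hf₀0 hf₀half
    hg₀maps hg₀left hg₀right ρ hρint hinv₀ η hη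
  have hA₁ := branch_identity α (1/2) 1 hα (by norm_num)
    (Icc_subset_Icc (by norm_num) le_rfl) f₁ g₁ hcont₁ hd₁ hlb₁ M hub₁ hfa₁ hfb₁
    hg₁maps hg₁left hg₁right ρ hρint hinv₁ η hη
  rw [hA₀, hA₁]
  ring
end

section
/- Let ζ be a nonnegative integrable function on [0,1] satisfying the one-dimensional Perron–Frobenius equation ζ(x) = g₀'(x) ζ(g₀(x)) + g₁'(x) ζ(g₁(x)) a.e., and suppose moreover that g₀'(z) ζ(g₀(z)) = g₁'(z) ζ(g₁(z)) for a.e. z ∈ [0,1]. Then the product density ρ(x,y) = ζ(x) ζ(y) is an invariant density for F. -/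
open Set MeasureTheory

/-!
Adding the Perron–Frobenius equation and the balance condition gives
`ζ = 2 g₀' · ζ ∘ g₀ = 2 g₁' · ζ ∘ g₁` a.e. on `[0,1]`. Reading the `i`-th identity at `f_i y`
and using `g_i' (f_i y) = 1 / f_i' y` turns it into `f_i' y · ζ (f_i y) = 2 ζ y` for a.e.
`y` in the domain of `f_i`; the exceptional set there is the image of a null set under the
Lipschitz inverse branch `g_i`, hence null. Multiplying the identity in `x` by the one in `y`
gives the invariance equation for `ζ(x) ζ(y)`.
-/

lemma LipschitzOnWith.volume_image_null {g : ℝ → ℝ} {s t : Set ℝ} {K : NNReal}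
    (hg : LipschitzOnWith K g s) (hts : t ⊆ s) (ht : volume t = 0) :
    volume (g '' t) = 0 := by
  have h := (hg.mono hts).hausdorffMeasure_image_le (zero_le_one (α := ℝ))
  rw [hausdorffMeasure_real, ht, mul_zero] at h
  exact le_antisymm h zero_le

lemma lipschitzOnWith_of_rightInvOn_of_mul_dist_le {X Y : Type*} [PseudoMetricSpace X]
    [PseudoMetricSpace Y] {f : X → Y} {g : Y → X} {s : Set Y} {t : Set X} {α : ℝ}
    (hα : 0 < α) (hg : MapsTo g s t) (hfg : ∀ y ∈ s, f (g y) = y)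
    (hf : ∀ x ∈ t, ∀ x' ∈ t, α * dist x x' ≤ dist (f x) (f x')) :
    LipschitzOnWith (Real.toNNReal α⁻¹) g s := by
  refine LipschitzOnWith.of_dist_le_mul fun y hy y' hy' => ?_
  have h := hf _ (hg hy) _ (hg hy')
  rw [hfg y hy, hfg y' hy'] at h
  rw [Real.coe_toNNReal _ (inv_nonneg.2 hα.le), inv_mul_eq_div, le_div_iff₀ hα, mul_comm]
  exact h

lemma mul_dist_le_dist_of_le_deriv {f : ℝ → ℝ} {a b α : ℝ}
    (hcont : ContinuousOn f (Icc a b)) (hdiff : ∀ x ∈ Ioo a b, DifferentiableAt ℝ f x)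
    (hderiv : ∀ x ∈ Ioo a b, α ≤ deriv f x) :
    ∀ x ∈ Icc a b, ∀ y ∈ Icc a b, α * dist x y ≤ dist (f x) (f y) := by
  have hmono := (convex_Icc a b).mul_sub_le_image_sub_of_le_deriv hcont
    (fun x hx => (hdiff x (by rwa [interior_Icc] at hx)).differentiableWithinAt)
    (fun x hx => hderiv x (by rwa [interior_Icc] at hx))
  intro x hx y hy
  rcases le_total x y with hxy | hyx
  · rw [dist_comm x, dist_comm (f x), Real.dist_eq, abs_of_nonneg (sub_nonneg.2 hxy)]
    exact (hmono x hx y hy hxy).trans (le_abs_self _)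
  · rw [Real.dist_eq, abs_of_nonneg (sub_nonneg.2 hyx)]
    exact (hmono y hy x hx hyx).trans (le_abs_self _)

structure IsExpandingBranch (f : ℝ → ℝ) (α a b c d : ℝ) : Prop where
  continuousOn : ContinuousOn f (Icc a b)
  differentiableAt : ∀ x ∈ Ioo a b, DifferentiableAt ℝ f x
  le_deriv : ∀ x ∈ Ioo a b, α ≤ deriv f x
  mapsTo : MapsTo f (Icc a b) (Icc c d)

lemma hasDerivAt_one_sub_comp_one_sub {f : ℝ → ℝ} {f' x : ℝ} (h : HasDerivAt f f' (1 - x)) :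
    HasDerivAt (fun y => 1 - f (1 - y)) f' x := by
  simpa using (h.comp x ((hasDerivAt_id x).const_sub 1)).const_sub 1

lemma IsExpandingBranch.one_sub_comp_one_sub {f : ℝ → ℝ} {α a b c d : ℝ}
    (hf : IsExpandingBranch f α a b c d) :
    IsExpandingBranch (fun x => 1 - f (1 - x)) α (1 - b) (1 - a) (1 - d) (1 - c) := by
  have hreflect : MapsTo (fun x : ℝ => 1 - x) (Icc (1 - b) (1 - a)) (Icc a b) :=
    fun x hx => ⟨by linarith [hx.2], by linarith [hx.1]⟩
  have hreflect' : ∀ x ∈ Ioo (1 - b) (1 - a), 1 - x ∈ Ioo a b :=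
    fun x hx => ⟨by linarith [hx.2], by linarith [hx.1]⟩
  have hderiv : ∀ x ∈ Ioo (1 - b) (1 - a),
      HasDerivAt (fun y => 1 - f (1 - y)) (deriv f (1 - x)) x := fun x hx =>
    hasDerivAt_one_sub_comp_one_sub (hf.differentiableAt _ (hreflect' x hx)).hasDerivAt
  refine ⟨continuousOn_const.sub (hf.continuousOn.comp
      (continuousOn_const.sub continuousOn_id) hreflect),
    fun x hx => (hderiv x hx).differentiableAt,
    fun x hx => (hderiv x hx).deriv ▸ hf.le_deriv _ (hreflect' x hx), fun x hx => ?_⟩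
  have := hf.mapsTo (hreflect hx)
  exact ⟨by linarith [this.2], by linarith [this.1]⟩

theorem IsExpandingBranch.ae_deriv_mul_comp_eq_of_ae_eq_deriv_inverse_mul_comp
    {f g φ ψ : ℝ → ℝ} {α a b c d : ℝ} (hα : 0 < α) (hf : IsExpandingBranch f α a b c d)
    (hg : MapsTo g (Icc c d) (Icc a b))
    (hgf : ∀ x ∈ Icc a b, g (f x) = x) (hfg : ∀ y ∈ Icc c d, f (g y) = y)
    (hφ : ∀ᵐ z ∂volume.restrict (Icc c d), φ z = deriv g z * ψ (g z)) :
    ∀ᵐ x ∂volume.restrict (Icc a b), deriv f x * φ (f x) = ψ x := by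
  have hLip := lipschitzOnWith_of_rightInvOn_of_mul_dist_le hα hg hfg
    (mul_dist_le_dist_of_le_deriv hf.continuousOn hf.differentiableAt hf.le_deriv)
  -- `c` and `d` are excluded because `deriv g` is two-sided: `g` inverts `f` only on `[c, d]`.
  set N : Set ℝ := {z | ¬(z ∈ Icc c d → φ z = deriv g z * ψ (g z))} ∪ {c, d}
  have hN : volume N = 0 :=
    measure_union_null (ae_iff.1 ((ae_restrict_iff' measurableSet_Icc).1 hφ))
      ((toFinite _).measure_zero _)
  have hbad : volume (g '' (N ∩ Icc c d) ∪ {a, b}) = 0 :=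
    measure_union_null (hLip.volume_image_null inter_subset_right
      (measure_mono_null inter_subset_left hN)) ((toFinite _).measure_zero _)
  rw [ae_restrict_iff' measurableSet_Icc]
  filter_upwards [measure_eq_zero_iff_ae_notMem.1 hbad] with x hx hxI
  have hxo : x ∈ Ioo a b := Icc_sdiff_both (a := a) (b := b) ▸ ⟨hxI, fun h => hx (Or.inr h)⟩
  have hfxN : f x ∉ N := fun h => hx (Or.inl ⟨f x, ⟨h, hf.mapsTo hxI⟩, hgf x hxI⟩)
  have hfxo : f x ∈ Ioo c d :=
    Icc_sdiff_both (a := c) (b := d) ▸ ⟨hf.mapsTo hxI, fun h => hfxN (Or.inr h)⟩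
  have hφfx : φ (f x) = deriv g (f x) * ψ x := by
    by_contra hne
    exact hfxN (Or.inl fun h => hne (by rw [h (hf.mapsTo hxI), hgf x hxI]))
  have hnhds : Icc c d ∈ nhds (f x) := Icc_mem_nhds hfxo.1 hfxo.2
  have hf'pos : 0 < deriv f x := hα.trans_le (hf.le_deriv x hxo)
  have hg' : HasDerivAt g (deriv f x)⁻¹ (f x) :=
    HasDerivAt.of_local_left_inverse (hLip.continuousOn.continuousAt hnhds)
      (by rw [hgf x hxI]; exact (hf.differentiableAt x hxo).hasDerivAt) hf'pos.ne'
      (Filter.eventually_of_mem hnhds hfg)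
  rw [hφfx, hg'.deriv, ← mul_assoc, mul_inv_cancel₀ hf'pos.ne', one_mul]

lemma ae_restrict_prod_of_ae_restrict {X Y : Type*} [MeasurableSpace X] [MeasurableSpace Y]
    {μ : Measure X} {ν : Measure Y} [SFinite μ] [SFinite ν] {s : Set X} {t : Set Y}
    {P : X → Prop} {Q : Y → Prop} (hP : ∀ᵐ x ∂μ.restrict s, P x)
    (hQ : ∀ᵐ y ∂ν.restrict t, Q y) :
    ∀ᵐ p ∂(μ.prod ν).restrict (s ×ˢ t), P p.1 ∧ Q p.2 := by
  rw [← Measure.prod_restrict]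
  exact (Measure.quasiMeasurePreserving_fst.ae hP).and
    (Measure.quasiMeasurePreserving_snd.ae hQ)

theorem product_density_invariant_of_branch_balance_general
    (α : ℝ) (hα : 1 < α)
    (f₀ f₁ g₀ g₁ : ℝ → ℝ)
    (hf₀C : ContDiffOn ℝ 2 f₀ (Icc 0 (1/2)))
    (hf₀deriv : ∀ x ∈ Icc (0:ℝ) (1/2), α ≤ deriv f₀ x)
    (hf₀maps : MapsTo f₀ (Icc 0 (1/2)) (Icc 0 1))
    (hf₁ : ∀ x, f₁ x = 1 - f₀ (1 - x))
    (hg₀maps : MapsTo g₀ (Icc 0 1) (Icc 0 (1/2)))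
    (hg₁maps : MapsTo g₁ (Icc 0 1) (Icc (1/2) 1))
    (hg₀left : ∀ x ∈ Icc (0:ℝ) (1/2), g₀ (f₀ x) = x)
    (hg₀right : ∀ y ∈ Icc (0:ℝ) 1, f₀ (g₀ y) = y)
    (hg₁left : ∀ x ∈ Icc (1/2:ℝ) 1, g₁ (f₁ x) = x)
    (hg₁right : ∀ y ∈ Icc (0:ℝ) 1, f₁ (g₁ y) = y)
    (ζ : ℝ → ℝ)
    (hζpos : ∀ x ∈ Icc (0:ℝ) 1, 0 ≤ ζ x)
    (hζint : IntegrableOn ζ (Icc 0 1))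
    (hζPF : ∀ᵐ x ∂(volume.restrict (Icc (0:ℝ) 1)),
      ζ x = deriv g₀ x * ζ (g₀ x) + deriv g₁ x * ζ (g₁ x))
    (hbal : ∀ᵐ z ∂(volume.restrict (Icc (0:ℝ) 1)),
      deriv g₀ z * ζ (g₀ z) = deriv g₁ z * ζ (g₁ z)) :
    IsInvariantDensity f₀ f₁ g₀ g₁ (fun p => ζ p.1 * ζ p.2) := by
  have hα₀ : 0 < α := by linarith
  have hB₀ : IsExpandingBranch f₀ α 0 (1/2) 0 1 :=
    ⟨hf₀C.continuousOn, fun x hx => (hf₀C.differentiableOn (by norm_num)).differentiableAt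
      (Icc_mem_nhds hx.1 hx.2), fun x hx => hf₀deriv x (Ioo_subset_Icc_self hx), hf₀maps⟩
  have hB₁ : IsExpandingBranch f₁ α (1/2) 1 0 1 := by
    convert hB₀.one_sub_comp_one_sub using 1 <;> first | exact funext hf₁ | norm_num
  have hζsplit : ∀ᵐ z ∂volume.restrict (Icc (0:ℝ) 1),
      ζ z = deriv g₀ z * (2 * ζ (g₀ z)) ∧ ζ z = deriv g₁ z * (2 * ζ (g₁ z)) := by
    filter_upwards [hζPF, hbal] with z hPF hb
    constructor <;> linarith
  have h₀ : ∀ᵐ y ∂volume.restrict (Icc (0:ℝ) (1/2)), deriv f₀ y * ζ (f₀ y) = 2 * ζ y :=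
    hB₀.ae_deriv_mul_comp_eq_of_ae_eq_deriv_inverse_mul_comp hα₀ hg₀maps hg₀left
      hg₀right (hζsplit.mono fun _ h => h.1)
  have h₁ : ∀ᵐ y ∂volume.restrict (Icc (1/2:ℝ) 1), deriv f₁ y * ζ (f₁ y) = 2 * ζ y :=
    hB₁.ae_deriv_mul_comp_eq_of_ae_eq_deriv_inverse_mul_comp hα₀ hg₁maps hg₁left
      hg₁right (hζsplit.mono fun _ h => h.2)
  have hy : ∀ᵐ y ∂volume.restrict (Icc (0:ℝ) 1),
      (y < 1/2 → deriv f₀ y * ζ (f₀ y) = 2 * ζ y) ∧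
      (1/2 ≤ y → deriv f₁ y * ζ (f₁ y) = 2 * ζ y) := by
    rw [ae_restrict_iff' measurableSet_Icc] at h₀ h₁ ⊢
    filter_upwards [h₀, h₁] with y hy₀ hy₁ hy
    exact ⟨fun hlt => hy₀ ⟨hy.1, hlt.le⟩, fun hge => hy₁ ⟨hge, hy.2⟩⟩
  refine ⟨fun p hp => mul_nonneg (hζpos _ hp.1) (hζpos _ hp.2), ?_, ?_⟩
  · rw [IntegrableOn, Measure.volume_eq_prod, ← Measure.prod_restrict]
    exact hζint.mul_prod hζint
  · rw [Measure.volume_eq_prod]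
    filter_upwards [ae_restrict_prod_of_ae_restrict hζsplit hy] with p ⟨⟨hx₀, hx₁⟩, hy₀, hy₁⟩
    exact ⟨fun h => by linear_combination ζ p.2 * hx₀ - deriv g₀ p.1 * ζ (g₀ p.1) * hy₀ h,
      fun h => by linear_combination ζ p.2 * hx₁ - deriv g₁ p.1 * ζ (g₁ p.1) * hy₁ h⟩

/-- If `ζ` solves the one-dimensional Perron–Frobenius equation
and moreover the two branch contributions balance,
`g₀'(z) ζ(g₀ z) = g₁'(z) ζ(g₁ z)` a.e., then the product density
`ρ(x,y) = ζ(x) ζ(y)` is an invariant density for `F`. -/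
theorem product_density_invariant_of_branch_balance
    (α : ℝ) (hα : 1 < α)
    (f₀ f₁ g₀ g₁ : ℝ → ℝ)
    (hf₀C : ContDiffOn ℝ 2 f₀ (Icc 0 (1/2)))
    (hf₀0 : f₀ 0 = 0) (hf₀half : f₀ (1/2) = 1)
    (hf₀deriv : ∀ x ∈ Icc (0:ℝ) (1/2), α ≤ deriv f₀ x)
    (hf₀maps : MapsTo f₀ (Icc 0 (1/2)) (Icc 0 1))
    (hf₁ : ∀ x, f₁ x = 1 - f₀ (1 - x))
    (hg₀maps : MapsTo g₀ (Icc 0 1) (Icc 0 (1/2)))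
    (hg₁maps : MapsTo g₁ (Icc 0 1) (Icc (1/2) 1))
    (hg₀left : ∀ x ∈ Icc (0:ℝ) (1/2), g₀ (f₀ x) = x)
    (hg₀right : ∀ y ∈ Icc (0:ℝ) 1, f₀ (g₀ y) = y)
    (hg₁left : ∀ x ∈ Icc (1/2:ℝ) 1, g₁ (f₁ x) = x)
    (hg₁right : ∀ y ∈ Icc (0:ℝ) 1, f₁ (g₁ y) = y)
    (ζ : ℝ → ℝ)
    (hζpos : ∀ x ∈ Icc (0:ℝ) 1, 0 ≤ ζ x)
    (hζint : IntegrableOn ζ (Icc 0 1))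
    (hζPF : ∀ᵐ x ∂(volume.restrict (Icc (0:ℝ) 1)),
      ζ x = deriv g₀ x * ζ (g₀ x) + deriv g₁ x * ζ (g₁ x))
    (hbal : ∀ᵐ z ∂(volume.restrict (Icc (0:ℝ) 1)),
      deriv g₀ z * ζ (g₀ z) = deriv g₁ z * ζ (g₁ z)) :
    IsInvariantDensity f₀ f₁ g₀ g₁ (fun p => ζ p.1 * ζ p.2) :=
  product_density_invariant_of_branch_balance_general α hα f₀ f₁ g₀ g₁ hf₀C hf₀deriv hf₀maps hf₁
    hg₀maps hg₁maps hg₀left hg₀right hg₁left hg₁right ζ hζpos hζint hζPF hbal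
end

section
/- For the triangular map built from the logistic map, the product of the arcsine densities is an invariant density: with f₀(x) = 4x(1-x), f₁(x) = (2x-1)², g₀(x) = (1-√(1-x))/2, g₁(x) = (1+√x)/2 and ζ(x) = 1/(π√(x(1-x))), the function ρ(x,y) = ζ(x) ζ(y) satisfies, for a.e. (x,y) ∈ (0,1)²: ρ(x,y) = g₀'(x) f₀'(y) ρ(g₀(x), f₀(y)) when 0 < y < 1/2, and ρ(x,y) = g₁'(x) f₁'(y) ρ(g₁(x), f₁(y)) when 1/2 ≤ y < 1. -/
/-!
Each factor of `ρ` is transported separately. A branch `h` of either map satisfies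
`h x (1 - h x) = x (1 - x) (h' x / k)²` with `k = 2` for `f₀, f₁` and `k = 1/2` for `g₀, g₁`,
and where `h' > 0` this identity alone gives `h' · ζ ∘ h = k ζ`. The factors `2` and `1/2`
then cancel in the product, away from the null line `y = 1/2` where `f₀'` and `f₁'` vanish.
-/

open Set MeasureTheory Real

noncomputable def arcsineDensity (x : ℝ) : ℝ := 1 / (π * √(x * (1 - x)))

lemma arcsineDensity_eq_div_abs {u v c : ℝ} (h : u * (1 - u) = v * (1 - v) * c ^ 2) :
    arcsineDensity u = arcsineDensity v / |c| := by
  rw [arcsineDensity, arcsineDensity, h, sqrt_mul' _ (sq_nonneg c), sqrt_sq_eq_abs]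
  ring

lemma hasDerivAt_four_mul_mul_one_sub (y : ℝ) :
    HasDerivAt (fun t => 4 * t * (1 - t)) (4 - 8 * y) y :=
  (((hasDerivAt_id' y).const_mul 4).mul ((hasDerivAt_id' y).const_sub 1)).congr_deriv (by ring)

lemma hasDerivAt_two_mul_sub_one_sq (y : ℝ) :
    HasDerivAt (fun t => (2 * t - 1) ^ 2) (8 * y - 4) y :=
  ((((hasDerivAt_id' y).const_mul 2).sub_const 1).pow 2).congr_deriv (by norm_num; ring)

lemma hasDerivAt_one_sub_sqrt_one_sub_div_two {x : ℝ} (hx : x < 1) :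
    HasDerivAt (fun t => (1 - √(1 - t)) / 2) (1 / (4 * √(1 - x))) x := by
  have hs : √(1 - x) ≠ 0 := (sqrt_pos.2 (sub_pos.2 hx)).ne'
  have hsqrt := ((hasDerivAt_id' x).const_sub 1).sqrt (sub_pos.2 hx).ne'
  refine ((hsqrt.const_sub 1).div_const 2).congr_deriv ?_
  field_simp
  ring

lemma hasDerivAt_one_add_sqrt_div_two {x : ℝ} (hx : 0 < x) :
    HasDerivAt (fun t => (1 + √t) / 2) (1 / (4 * √x)) x := by
  have hs : √x ≠ 0 := (sqrt_pos.2 hx).ne'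
  refine (((hasDerivAt_sqrt hx.ne').const_add 1).div_const 2).congr_deriv ?_
  field_simp
  ring

lemma mul_arcsineDensity_four_mul_mul_one_sub {y : ℝ} (hy : y < 1 / 2) :
    (4 - 8 * y) * arcsineDensity (4 * y * (1 - y)) = 2 * arcsineDensity y := by
  have hc : 0 < 2 * (1 - 2 * y) := by linarith
  rw [arcsineDensity_eq_div_abs (c := 2 * (1 - 2 * y)) (by ring), abs_of_pos hc,
    show 4 - 8 * y = 2 * (2 * (1 - 2 * y)) by ring, mul_assoc, mul_div_cancel₀ _ hc.ne']

lemma mul_arcsineDensity_two_mul_sub_one_sq {y : ℝ} (hy : 1 / 2 < y) :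
    (8 * y - 4) * arcsineDensity ((2 * y - 1) ^ 2) = 2 * arcsineDensity y := by
  have hc : 0 < 2 * (2 * y - 1) := by linarith
  rw [arcsineDensity_eq_div_abs (c := 2 * (2 * y - 1)) (by ring), abs_of_pos hc,
    show 8 * y - 4 = 2 * (2 * (2 * y - 1)) by ring, mul_assoc, mul_div_cancel₀ _ hc.ne']

lemma mul_arcsineDensity_one_sub_sqrt_one_sub_div_two {x : ℝ} (hx : x < 1) :
    1 / (4 * √(1 - x)) * arcsineDensity ((1 - √(1 - x)) / 2) = arcsineDensity x / 2 := by
  have hs : 0 < √(1 - x) := sqrt_pos.2 (sub_pos.2 hx)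
  have hsq : √(1 - x) ^ 2 = 1 - x := sq_sqrt (sub_pos.2 hx).le
  rw [arcsineDensity_eq_div_abs (v := x) (c := 1 / (2 * √(1 - x))), abs_of_pos (by positivity)]
  · field_simp
    ring
  · field_simp
    linear_combination (x - √(1 - x) ^ 2) * hsq

lemma mul_arcsineDensity_one_add_sqrt_div_two {x : ℝ} (hx : 0 < x) :
    1 / (4 * √x) * arcsineDensity ((1 + √x) / 2) = arcsineDensity x / 2 := by
  have hs : 0 < √x := sqrt_pos.2 hx
  have hsq : √x ^ 2 = x := sq_sqrt hx.le
  rw [arcsineDensity_eq_div_abs (v := x) (c := 1 / (2 * √x)), abs_of_pos (by positivity)]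
  · field_simp
    ring
  · field_simp
    linear_combination (1 - x - √x ^ 2) * hsq

/-- For the triangular map built from the logistic map
`f₀(x) = 4x(1-x)`, `f₁(x) = (2x-1)²`, with inverse branches
`g₀(x) = (1-√(1-x))/2`, `g₁(x) = (1+√x)/2`, the product of the arcsine densities
`ρ(x,y) = ζ(x) ζ(y)`, `ζ(x) = 1/(π√(x(1-x)))`, is an invariant density:
it satisfies the Perron–Frobenius equation a.e. on `(0,1)²`. -/
theorem logistic_product_arcsine_invariant
    (f₀ f₁ g₀ g₁ ζ : ℝ → ℝ)
    (hf₀ : ∀ x, f₀ x = 4 * x * (1 - x))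
    (hf₁ : ∀ x, f₁ x = (2 * x - 1) ^ 2)
    (hg₀ : ∀ x, g₀ x = (1 - Real.sqrt (1 - x)) / 2)
    (hg₁ : ∀ x, g₁ x = (1 + Real.sqrt x) / 2)
    (hζ : ∀ x, ζ x = 1 / (Real.pi * Real.sqrt (x * (1 - x))))
    (ρ : ℝ × ℝ → ℝ)
    (hρ : ∀ p : ℝ × ℝ, ρ p = ζ p.1 * ζ p.2) :
    ∀ᵐ p ∂(volume.restrict (Ioo (0:ℝ) 1 ×ˢ Ioo (0:ℝ) 1)),
      (p.2 < 1/2 → ρ p = deriv g₀ p.1 * deriv f₀ p.2 * ρ (g₀ p.1, f₀ p.2)) ∧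
      (1/2 ≤ p.2 → ρ p = deriv g₁ p.1 * deriv f₁ p.2 * ρ (g₁ p.1, f₁ p.2)) := by
  obtain rfl : f₀ = fun x => 4 * x * (1 - x) := funext hf₀
  obtain rfl : f₁ = fun x => (2 * x - 1) ^ 2 := funext hf₁
  obtain rfl : g₀ = fun x => (1 - √(1 - x)) / 2 := funext hg₀
  obtain rfl : g₁ = fun x => (1 + √x) / 2 := funext hg₁
  obtain rfl : ζ = arcsineDensity := funext hζ
  have hy_ne : ∀ᵐ p : ℝ × ℝ, p.2 ≠ 1 / 2 :=
    Measure.quasiMeasurePreserving_snd.ae (Measure.ae_ne volume (1 / 2))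
  filter_upwards [ae_restrict_mem (measurableSet_Ioo.prod measurableSet_Ioo),
    ae_restrict_of_ae hy_ne] with ⟨x, y⟩ ⟨⟨hx₀, hx₁⟩, _⟩ hy
  simp only [hρ, mul_mul_mul_comm (deriv _ x)]
  refine ⟨fun hy_lt => ?_, fun hy_ge => ?_⟩
  · rw [(hasDerivAt_one_sub_sqrt_one_sub_div_two hx₁).deriv,
      (hasDerivAt_four_mul_mul_one_sub y).deriv,
      mul_arcsineDensity_one_sub_sqrt_one_sub_div_two hx₁,
      mul_arcsineDensity_four_mul_mul_one_sub hy_lt]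
    ring
  · rw [(hasDerivAt_one_add_sqrt_div_two hx₀).deriv, (hasDerivAt_two_mul_sub_one_sq y).deriv,
      mul_arcsineDensity_one_add_sqrt_div_two hx₀,
      mul_arcsineDensity_two_mul_sub_one_sq (lt_of_le_of_ne hy_ge (Ne.symm hy))]
    ring
end
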